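/- arXiv:1111.5401 — 10 statements merged into one kernel-verified Lean document; each statement's English description precedes it below -/
import Mathlib

section
/- For a positive integer n, the polynomial t^n + 1 has a divisor in ℤ[t] of every degree m with 1 ≤ m ≤ n if and only if n is odd and n is φ-practical. -/
/-!
Over `ℤ`, `X ^ n - 1 = ∏_{d ∣ n} Φ_d` with every `Φ_d` prime in `ℤ[X]`, so the divisors of
`X ^ n - 1` are, up to units, the subproducts, of degree `∑ φ(d)`. For odd `n` the substitution
`X ↦ -X` exchanges `X ^ n - 1` and `X ^ n + 1` up to sign and preserves degrees. For even `n`,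
`X ^ n + 1` has no real root, hence no linear factor.
-/

/-- A positive integer `n` is φ-practical if every integer `m` with `1 ≤ m ≤ n`
is a sum of totients of a subset of the divisors of `n`. -/
def IsPhiPractical (n : ℕ) : Prop :=
  0 < n ∧ ∀ m : ℕ, 1 ≤ m → m ≤ n →
    ∃ D : Finset ℕ, D ⊆ n.divisors ∧ m = ∑ d ∈ D, Nat.totient d

open Polynomial

theorem exists_subset_associated_prod_of_dvd_prod {α ι : Type*} [CommMonoidWithZero α]
    [IsCancelMulZero α] [DecidableEq ι] {p : ι → α} {s : Finset ι} (hp : ∀ i ∈ s, Prime (p i))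
    {x : α} (hx : x ∣ ∏ i ∈ s, p i) : ∃ t ⊆ s, Associated x (∏ i ∈ t, p i) := by
  induction s using Finset.induction_on generalizing x with
  | empty => exact ⟨∅, subset_rfl, associated_one_iff_isUnit.mpr (isUnit_of_dvd_one hx)⟩
  | insert a s ha ih =>
    rw [Finset.forall_mem_insert] at hp
    rw [Finset.prod_insert ha] at hx
    by_cases hax : p a ∣ x
    · obtain ⟨y, rfl⟩ := hax
      obtain ⟨t, hts, hyt⟩ := ih hp.2 ((mul_dvd_mul_iff_left hp.1.ne_zero).mp hx)
      refine ⟨insert a t, Finset.insert_subset_insert a hts, ?_⟩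
      rw [Finset.prod_insert fun hat => ha (hts hat)]
      exact hyt.mul_left (p a)
    · obtain ⟨c, hc⟩ := hx
      obtain ⟨c', rfl⟩ := (hp.1.dvd_or_dvd ⟨_, hc.symm⟩).resolve_left hax
      have hxs : x ∣ ∏ i ∈ s, p i :=
        ⟨c', mul_left_cancel₀ hp.1.ne_zero (hc.trans (mul_left_comm _ _ _))⟩
      obtain ⟨t, hts, hxt⟩ := ih hp.2 hxs
      exact ⟨t, hts.trans (Finset.subset_insert a s), hxt⟩

theorem natDegree_prod_cyclotomic (D : Finset ℕ) :
    (∏ d ∈ D, cyclotomic d ℤ).natDegree = ∑ d ∈ D, d.totient := by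
  rw [natDegree_prod _ _ fun d _ => cyclotomic_ne_zero d ℤ]
  simp only [natDegree_cyclotomic]

theorem exists_natDegree_eq_dvd_X_pow_sub_one_iff {n : ℕ} (hn : 0 < n) (m : ℕ) :
    (∃ f : ℤ[X], f.natDegree = m ∧ f ∣ X ^ n - 1) ↔
      ∃ D ⊆ n.divisors, m = ∑ d ∈ D, d.totient := by
  rw [← prod_cyclotomic_eq_X_pow_sub_one hn]
  constructor
  · rintro ⟨f, rfl, hf⟩
    have hprime : ∀ d ∈ n.divisors, Prime (cyclotomic d ℤ) := fun d hd =>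
      (cyclotomic.irreducible (Nat.pos_of_mem_divisors hd)).prime
    obtain ⟨D, hD, hfD⟩ := exists_subset_associated_prod_of_dvd_prod hprime hf
    exact ⟨D, hD, (natDegree_eq_of_degree_eq (degree_eq_degree_of_associated hfD)).trans
      (natDegree_prod_cyclotomic D)⟩
  · rintro ⟨D, hD, rfl⟩
    exact ⟨_, natDegree_prod_cyclotomic D, Finset.prod_dvd_prod_of_subset _ _ _ hD⟩

theorem exists_natDegree_eq_dvd_of_dvd_comp_neg_X {R : Type*} [CommRing R] [IsDomain R]
    {g h : R[X]} (hgh : g.comp (-X) ∣ h) {m : ℕ} (hg : ∃ f : R[X], f.natDegree = m ∧ f ∣ g) :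
    ∃ f : R[X], f.natDegree = m ∧ f ∣ h := by
  obtain ⟨f, rfl, hfg⟩ := hg
  refine ⟨f.comp (-X), ?_, ?_⟩
  · rw [natDegree_comp, natDegree_neg, natDegree_X, mul_one]
  · refine ((dvd_comp_neg_X_iff _ _).mp ?_).trans hgh
    rwa [comp_assoc, neg_comp, X_comp, neg_neg, comp_X]

theorem X_pow_add_one_comp_neg_X {R : Type*} [CommRing R] {n : ℕ} (hn : Odd n) :
    ((X : R[X]) ^ n + 1).comp (-X) = -(X ^ n - 1) := by
  rw [add_comp, pow_comp, X_comp, one_comp, hn.neg_pow]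
  ring

theorem X_pow_sub_one_comp_neg_X {R : Type*} [CommRing R] {n : ℕ} (hn : Odd n) :
    ((X : R[X]) ^ n - 1).comp (-X) = -(X ^ n + 1) := by
  rw [sub_comp, pow_comp, X_comp, one_comp, hn.neg_pow]
  ring

theorem not_exists_natDegree_eq_one_dvd_X_pow_add_one {n : ℕ} (hn : Even n) :
    ¬∃ f : ℤ[X], f.natDegree = 1 ∧ f ∣ X ^ n + 1 := by
  rintro ⟨f, hf, hfX⟩
  have hdeg : (f.map (Int.castRingHom ℝ)).degree = 1 := by
    rw [degree_map_eq_of_injective (RingHom.injective_int _), degree_eq_natDegree, hf,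
      Nat.cast_one]
    rintro rfl
    simp at hf
  obtain ⟨r, hr⟩ := exists_root_of_degree_eq_one hdeg
  have hroot : r ^ n + 1 = 0 := by
    simpa using eval_eq_zero_of_dvd_of_eval_eq_zero (Polynomial.map_dvd _ hfX) hr
  linarith [hn.pow_nonneg r]

theorem xPowAddOne_divisor_every_degree_iff (n : ℕ) (hn : 0 < n) :
    (∀ m : ℕ, 1 ≤ m → m ≤ n →
      ∃ f : Polynomial ℤ, f.natDegree = m ∧ f ∣ (Polynomial.X ^ n + 1)) ↔
    (Odd n ∧ IsPhiPractical n) := by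
  constructor
  · intro H
    have hodd : Odd n := Nat.not_even_iff_odd.mp fun heven =>
      not_exists_natDegree_eq_one_dvd_X_pow_add_one heven (H 1 le_rfl hn)
    refine ⟨hodd, hn, fun m hm1 hmn => ?_⟩
    refine (exists_natDegree_eq_dvd_X_pow_sub_one_iff hn m).mp ?_
    exact exists_natDegree_eq_dvd_of_dvd_comp_neg_X
      (by rw [X_pow_add_one_comp_neg_X hodd, neg_dvd]) (H m hm1 hmn)
  · rintro ⟨hodd, -, hpr⟩ m hm1 hmn
    refine exists_natDegree_eq_dvd_of_dvd_comp_neg_X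
      (by rw [X_pow_sub_one_comp_neg_X hodd, neg_dvd]) ?_
    exact (exists_natDegree_eq_dvd_X_pow_sub_one_iff hn m).mpr (hpr m hm1 hmn)
end

section
/- Stewart's Condition: let n = p₁^{e₁} p₂^{e₂} ··· p_j^{e_j}, where p₁ < p₂ < ··· < p_j are primes and e_i ≥ 1 for each i. Then n is practical if and only if for every i with 1 ≤ i ≤ j one has p_i ≤ σ(p₁^{e₁} ··· p_{i−1}^{e_{i−1}}) + 1, where σ is the sum-of-divisors function and the empty product is 1. -/
/-- A positive integer `n` is practical if every integer `m` with `1 ≤ m ≤ n`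
is a sum of distinct positive divisors of `n`. -/
def IsPractical (n : ℕ) : Prop :=
  0 < n ∧ ∀ m : ℕ, 1 ≤ m → m ≤ n →
    ∃ D : Finset ℕ, D ⊆ n.divisors ∧ m = ∑ d ∈ D, d

/-- Strong practicality: every `m` up to `σ(n)` is a sum of distinct divisors. -/
def QPrac (n : ℕ) : Prop :=
  ∀ m : ℕ, 1 ≤ m → m ≤ ∑ d ∈ n.divisors, d →
    ∃ D : Finset ℕ, D ⊆ n.divisors ∧ m = ∑ d ∈ D, d

lemma QPrac_one : QPrac 1 := by
  intro m h1 h2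
  simp only [Nat.divisors_one, Finset.sum_singleton] at h2
  exact ⟨{1}, by simp, by simpa using h2.antisymm (by simpa using h1)⟩

/-- digit representation lemma -/
lemma digit_rep (p S : ℕ) (hp : 2 ≤ p) (hS : p ≤ S + 1) :
    ∀ e m, m ≤ S * ∑ t ∈ Finset.range (e+1), p ^ t →
    ∃ c : ℕ → ℕ, (∀ t, c t ≤ S) ∧ m = ∑ t ∈ Finset.range (e+1), c t * p ^ t := by
  intro e
  induction e with
  | zero =>
    intro m hm
    have hm' : m ≤ S := by simpa using hm
    exact ⟨fun t => if t = 0 then m else 0, fun t => by dsimp; split <;> omega,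
      by rw [Finset.sum_range_one]; simp⟩
  | succ e ih =>
    intro m hm
    set T := ∑ t ∈ Finset.range (e+1), p ^ t with hT
    have hgeom : ∑ t ∈ Finset.range (e+2), p ^ t = p * T + 1 := by
      rw [Finset.sum_range_succ' (fun t => p ^ t) (e+1)]
      simp [pow_succ, Finset.sum_mul, Finset.mul_sum, hT, mul_comm]
    rw [hgeom] at hm
    have hm' : m ≤ S * T * p + S := by nlinarith
    set q := min (m / p) (S * T) with hq
    have hpq : p * q ≤ m := by
      have := Nat.mul_div_le m p
      have : p * (m / p) ≤ m := by rw [mul_comm]; exact Nat.div_mul_le_self m p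
      have hqle : q ≤ m / p := min_le_left _ _
      nlinarith
    have hc0 : m - p * q ≤ S := by
      rcases le_or_gt (m / p) (S * T) with h | h
      · have hq' : q = m / p := min_eq_left h
        have hmd := Nat.mod_add_div m p
        have hmod : m % p < p := Nat.mod_lt _ (by omega)
        have : m - p * q = m % p := by rw [hq']; omega
        omega
      · have hq' : q = S * T := min_eq_right (le_of_lt h)
        have hcomm : p * (S * T) = S * T * p := by ring
        rw [hq']
        omega
    have hqT : q ≤ S * T := min_le_right _ _
    obtain ⟨c, hcS, hcsum⟩ := ih q hqT
    refine ⟨fun t => Nat.casesOn t (m - p * q) (fun s => c s), ?_, ?_⟩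
    · intro t
      cases t with
      | zero => exact hc0
      | succ s => exact hcS s
    · rw [Finset.sum_range_succ'
        (fun t => (Nat.casesOn t (m - p * q) (fun s => c s) : ℕ) * p ^ t) (e+1)]
      have h2 : ∑ k ∈ Finset.range (e+1),
          (Nat.casesOn (k+1) (m - p * q) (fun s => c s) : ℕ) * p ^ (k+1) = p * q := by
        have h3 : ∀ k ∈ Finset.range (e+1),
            (Nat.casesOn (k+1) (m - p * q) (fun s => c s) : ℕ) * p ^ (k+1)
              = p * (c k * p ^ k) := by
          intro k _
          show c k * p ^ (k+1) = p * (c k * p ^ k)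
          rw [pow_succ]; ring
        rw [Finset.sum_congr rfl h3, ← Finset.mul_sum, ← hcsum]
      rw [h2]
      show m = p * q + (m - p * q) * p ^ 0
      rw [pow_zero, mul_one]
      omega

lemma QPrac_step {N p e : ℕ} (hN : 0 < N) (hp : p.Prime) (hpN : ¬ p ∣ N)
    (hple : p ≤ (∑ d ∈ N.divisors, d) + 1) (hQ : QPrac N) : QPrac (N * p ^ e) := by
  intro m hm1 hm2
  set S := ∑ d ∈ N.divisors, d with hS
  have hcop : N.Coprime (p ^ e) :=
    (Nat.Coprime.pow_right _ (((Nat.Prime.coprime_iff_not_dvd hp).2 hpN).symm))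
  have hsplit : ∑ d ∈ (N * p ^ e).divisors, d = S * ∑ t ∈ Finset.range (e+1), p ^ t := by
    rw [hcop.sum_divisors_mul, Nat.sum_divisors_prime_pow hp]
  rw [hsplit] at hm2
  obtain ⟨c, hcS, hcsum⟩ := digit_rep p S hp.two_le hple e m hm2
  have hchoice : ∀ t : ℕ, ∃ Dt : Finset ℕ, Dt ⊆ N.divisors ∧ c t = ∑ d ∈ Dt, d := by
    intro t
    rcases Nat.eq_zero_or_pos (c t) with h | h
    · exact ⟨∅, Finset.empty_subset _, by simp [h]⟩
    · exact hQ (c t) h (hcS t)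
  choose D hD1 hD2 using hchoice
  have hNpe : N * p ^ e ≠ 0 := Nat.mul_ne_zero hN.ne' (pow_ne_zero _ hp.pos.ne')
  -- key: elements of image t are d * p^t with d ∣ N, p ∤ d
  have hmemD : ∀ t, ∀ d ∈ D t, d ∣ N ∧ 0 < d := by
    intro t d hd
    have := hD1 t hd
    rw [Nat.mem_divisors] at this
    exact ⟨this.1, Nat.pos_of_dvd_of_pos this.1 hN⟩
  have hdisj : (↑(Finset.range (e+1)) : Set ℕ).PairwiseDisjoint
      (fun t => (D t).image (· * p ^ t)) := by
    intro t1 _ t2 _ hne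
    rw [Function.onFun, Finset.disjoint_left]
    intro x hx1 hx2
    simp only [Finset.mem_image] at hx1 hx2
    obtain ⟨d1, hd1, rfl⟩ := hx1
    obtain ⟨d2, hd2, hx⟩ := hx2
    obtain ⟨hd1N, hd1pos⟩ := hmemD _ _ hd1
    obtain ⟨hd2N, hd2pos⟩ := hmemD _ _ hd2
    -- wlog t2 < t1
    rcases lt_or_gt_of_ne hne with h | h
    · -- t1 < t2 : p ∣ d1
      apply hpN
      have : d1 * p ^ t1 = d2 * p ^ (t2 - t1) * p ^ t1 := by
        rw [hx.symm] ; rw [mul_assoc, ← pow_add]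
        congr 2
        omega
      have hd12 : d1 = d2 * p ^ (t2 - t1) := Nat.eq_of_mul_eq_mul_right (pow_pos hp.pos t1) this
      have : p ∣ d1 := by
        rw [hd12]
        exact Dvd.dvd.mul_left (dvd_pow_self p (by omega)) d2
      exact this.trans hd1N
    · apply hpN
      have : d2 * p ^ t2 = d1 * p ^ (t1 - t2) * p ^ t2 := by
        rw [hx] ; rw [mul_assoc, ← pow_add]
        congr 2
        omega
      have hd12 : d2 = d1 * p ^ (t1 - t2) := Nat.eq_of_mul_eq_mul_right (pow_pos hp.pos t2) this
      have : p ∣ d2 := by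
        rw [hd12]
        exact Dvd.dvd.mul_left (dvd_pow_self p (by omega)) d1
      exact this.trans hd2N
  refine ⟨(Finset.range (e+1)).biUnion (fun t => (D t).image (· * p ^ t)), ?_, ?_⟩
  · intro x hx
    simp only [Finset.mem_biUnion, Finset.mem_image, Finset.mem_range] at hx
    obtain ⟨t, ht, d, hd, rfl⟩ := hx
    rw [Nat.mem_divisors]
    exact ⟨mul_dvd_mul (hmemD t d hd).1 (pow_dvd_pow p (by omega)), hNpe⟩
  · rw [Finset.sum_biUnion hdisj]
    rw [hcsum]
    refine Finset.sum_congr rfl fun t _ => ?_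
    rw [Finset.sum_image (fun a _ b _ h => Nat.eq_of_mul_eq_mul_right (pow_pos hp.pos t) h)]
    rw [hD2 t, Finset.sum_mul]

/-- Stewart's condition: `n = p₁^{e₁} ⋯ p_j^{e_j}` (primes in increasing order,
all exponents positive) is practical iff each `p_i` is at most
`σ(p₁^{e₁} ⋯ p_{i-1}^{e_{i-1}}) + 1`. -/
theorem stewart_condition (j : ℕ) (p e : Fin j → ℕ)
    (hp : ∀ i, (p i).Prime) (hmono : StrictMono p) (he : ∀ i, 1 ≤ e i)
    (n : ℕ) (hn : n = ∏ i, p i ^ e i) :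
    IsPractical n ↔
      ∀ i, p i ≤ (∑ d ∈ (∏ k ∈ Finset.univ.filter (fun k => k < i), p k ^ e k).divisors, d) + 1 := by
  classical
  set N : ℕ → ℕ := fun i => ∏ k ∈ Finset.univ.filter (fun k : Fin j => (k : ℕ) < i), p k ^ e k
    with hNdef
  have hfe : ∀ i : Fin j, (∏ k ∈ Finset.univ.filter (fun k => k < i), p k ^ e k) = N i := by
    intro i
    rw [hNdef]
    congr 1
  have hNpos : ∀ i, 0 < N i := fun i =>
    Finset.prod_pos fun k _ => pow_pos (hp k).pos _
  have hnpos : 0 < n := by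
    rw [hn]; exact Finset.prod_pos fun k _ => pow_pos (hp k).pos _
  have hNj : N j = n := by
    rw [hn, hNdef]
    congr 1
    simp [Finset.filter_true_of_mem, Fin.is_lt]
  have hstep : ∀ i : Fin j, N ((i : ℕ) + 1) = N i * p i ^ e i := by
    intro i
    have hins : Finset.univ.filter (fun k : Fin j => (k : ℕ) < (i : ℕ) + 1)
        = insert i (Finset.univ.filter (fun k : Fin j => (k : ℕ) < (i : ℕ))) := by
      ext k
      simp only [Finset.mem_filter, Finset.mem_univ, true_and, Finset.mem_insert]
      constructor
      · intro h
        rcases Nat.lt_or_ge (k : ℕ) (i : ℕ) with h' | h'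
        · exact Or.inr h'
        · exact Or.inl (Fin.ext (by omega))
      · rintro (rfl | h) <;> omega
    show (∏ k ∈ Finset.univ.filter (fun k : Fin j => (k : ℕ) < (i : ℕ) + 1), p k ^ e k)
        = (∏ k ∈ Finset.univ.filter (fun k : Fin j => (k : ℕ) < (i : ℕ)), p k ^ e k) * p i ^ e i
    rw [hins, Finset.prod_insert (by simp), mul_comm]
  have hcop : ∀ i : Fin j, ¬ p i ∣ N i := by
    intro i hdvd
    rw [hNdef] at hdvd
    obtain ⟨k, hk, hdk⟩ := ((hp i).prime.dvd_finset_prod_iff _).1 hdvd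
    simp only [Finset.mem_filter, Finset.mem_univ, true_and] at hk
    have := (Nat.prime_dvd_prime_iff_eq (hp i) (hp k)).1 ((hp i).dvd_of_dvd_pow hdk)
    have : i = k := hmono.injective this
    omega
  constructor
  · -- practical → condition
    intro hpr i
    rw [hfe i]
    by_contra hlt
    push_neg at hlt
    set m := (∑ d ∈ (N i).divisors, d) + 1 with hm
    have hmn : m ≤ n := by
      have hpin : (p i : ℕ) ∣ n := by
        rw [hn]
        exact dvd_trans (dvd_pow_self _ (by have := he i; omega)) (Finset.dvd_prod_of_mem _ (Finset.mem_univ i))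
      have : p i ≤ n := Nat.le_of_dvd hnpos hpin
      omega
    obtain ⟨D, hD, hDsum⟩ := hpr.2 m (by omega) hmn
    -- every d ∈ D divides N i
    have hDsub : D ⊆ (N i).divisors := by
      intro d hd
      have hdn := hD hd
      rw [Nat.mem_divisors] at hdn
      have hdm : d ≤ m := hDsum ▸ Finset.single_le_sum (fun x _ => Nat.zero_le x) hd
      have hdpi : d < p i := by omega
      have hdpos : 0 < d := Nat.pos_of_dvd_of_pos hdn.1 hnpos
      -- d coprime to the rest
      have hrest : d.Coprime (∏ k ∈ Finset.univ.filter (fun k : Fin j => ¬ ((k : ℕ) < (i : ℕ))), p k ^ e k) := by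
        by_contra hnc
        obtain ⟨q, hq, hqd, hqM⟩ := Nat.Prime.not_coprime_iff_dvd.1 hnc
        obtain ⟨k, hk, hqk⟩ := (hq.prime.dvd_finset_prod_iff _).1 hqM
        simp only [Finset.mem_filter, Finset.mem_univ, true_and, not_lt] at hk
        have hqpk : q = p k := (Nat.prime_dvd_prime_iff_eq hq (hp k)).1 (hq.dvd_of_dvd_pow hqk)
        have hpk : p i ≤ p k := hmono.monotone (Fin.le_def.mpr hk)
        have : q ≤ d := Nat.le_of_dvd hdpos hqd
        omega
      have hdNi : d ∣ N i := by
        have hsplit : N i * (∏ k ∈ Finset.univ.filter (fun k : Fin j => ¬ ((k : ℕ) < (i : ℕ))), p k ^ e k) = n := by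
          rw [hn, hNdef]
          exact Finset.prod_filter_mul_prod_filter_not _ _ _
        exact (Nat.Coprime.dvd_of_dvd_mul_right hrest) (hsplit ▸ hdn.1)
      rw [Nat.mem_divisors]
      exact ⟨hdNi, (hNpos i).ne'⟩
    have : m ≤ ∑ d ∈ (N i).divisors, d :=
      hDsum ▸ Finset.sum_le_sum_of_subset hDsub
    omega
  · -- condition → practical
    intro hcond
    have key : ∀ m : ℕ, m ≤ j → QPrac (N m) := by
      intro m
      induction m with
      | zero =>
        intro _
        have : N 0 = 1 := by
          rw [hNdef]
          simp
        rw [this]; exact QPrac_one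
      | succ m ih =>
        intro hm
        have hmj : m < j := by omega
        set i : Fin j := ⟨m, hmj⟩ with hi
        have hN1 : N (m + 1) = N i * p i ^ e i := hstep i
        rw [hN1]
        refine QPrac_step (hNpos _) (hp i) (hcop i) ?_ (ih (by omega))
        have := hcond i
        rw [hfe i] at this
        exact this
    have hQn : QPrac n := hNj ▸ key j le_rfl
    refine ⟨hnpos, fun m h1 h2 => hQn m h1 (h2.trans ?_)⟩
    exact Finset.single_le_sum (fun x _ => Nat.zero_le x) (Nat.mem_divisors_self n hnpos.ne')
end

section
/- If M is a practical number and p is a prime with gcd(p, M) = 1, then for every k ≥ 1 the number p^k·M is practical if and only if p ≤ σ(M) + 1. -/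
open Finset

def RepresentsUpTo (S : Finset ℕ) (N : ℕ) : Prop :=
  ∀ t ≤ N, ∃ D ⊆ S, t = ∑ d ∈ D, d

namespace RepresentsUpTo

variable {S T : Finset ℕ} {N N' : ℕ}

theorem mono (h : RepresentsUpTo S N) (hST : S ⊆ T) (hN : N' ≤ N) : RepresentsUpTo T N' :=
  fun t ht ↦ (h t (ht.trans hN)).imp fun _ ⟨hD, hsum⟩ ↦ ⟨hD.trans hST, hsum⟩

theorem sum_of_le_sum_lt_add_one
    (hS : ∀ a ∈ S, a ≤ ∑ b ∈ S with b < a, b + 1) : RepresentsUpTo S (∑ b ∈ S, b) := by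
  induction S using Finset.induction_on_max with
  | empty => exact fun t ht ↦ ⟨∅, empty_subset _, by simpa using ht⟩
  | insert a S hlt ih =>
    have haS : a ∉ S := fun h ↦ (hlt a h).false
    have hfilter_a : {b ∈ insert a S | b < a} = S := by
      rw [filter_insert, if_neg (lt_irrefl a), filter_true_of_mem hlt]
    have hS' : ∀ b ∈ S, b ≤ ∑ c ∈ S with c < b, c + 1 := by
      intro b hb
      have hfilter_b : {c ∈ insert a S | c < b} = {c ∈ S | c < b} := by
        rw [filter_insert, if_neg (hlt b hb).asymm]
      simpa only [hfilter_b] using hS b (mem_insert_of_mem hb)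
    have ha : a ≤ ∑ b ∈ S, b + 1 := by simpa only [hfilter_a] using hS a (mem_insert_self a S)
    intro t ht
    rw [sum_insert haS] at ht
    by_cases htS : t ≤ ∑ b ∈ S, b
    · obtain ⟨D, hD, rfl⟩ := ih hS' t htS
      exact ⟨D, hD.trans (subset_insert a S), rfl⟩
    · obtain ⟨D, hD, hsum⟩ := ih hS' (t - a) (by omega)
      refine ⟨insert a D, insert_subset_insert a hD, ?_⟩
      rw [sum_insert fun h ↦ haS (hD h), ← hsum]
      omega

theorem exists_le_le_eq_add_mul {a b p t : ℕ} (hp : 0 < p) (hpa : p ≤ a + 1)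
    (ht : t ≤ a + p * b) : ∃ r q, r ≤ a ∧ q ≤ b ∧ t = r + p * q := by
  rcases le_or_gt (t / p) b with hq | hq
  · exact ⟨t % p, t / p, by have := Nat.mod_lt t hp; omega, hq, (Nat.mod_add_div t p).symm⟩
  · have : p * b ≤ t := (Nat.mul_le_mul_left p hq.le).trans (Nat.mul_div_le t p)
    exact ⟨t - p * b, b, by omega, le_rfl, by omega⟩

theorem union_image_mul {A B : Finset ℕ} {a b p : ℕ} (hA : RepresentsUpTo A a)
    (hB : RepresentsUpTo B b) (hp : 0 < p) (hpa : p ≤ a + 1)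
    (hdisj : Disjoint A (B.image (p * ·))) :
    RepresentsUpTo (A ∪ B.image (p * ·)) (a + p * b) := by
  intro t ht
  obtain ⟨r, q, hr, hq, rfl⟩ := exists_le_le_eq_add_mul hp hpa ht
  obtain ⟨DA, hDA, rfl⟩ := hA r hr
  obtain ⟨DB, hDB, rfl⟩ := hB q hq
  refine ⟨DA ∪ DB.image (p * ·), union_subset_union hDA (image_subset_image hDB), ?_⟩
  rw [sum_union (hdisj.mono hDA (image_subset_image hDB)),
    sum_image fun x _ y _ h ↦ Nat.eq_of_mul_eq_mul_left hp h, mul_sum]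

end RepresentsUpTo

theorem isPractical_iff {n : ℕ} : IsPractical n ↔ 0 < n ∧ RepresentsUpTo n.divisors n := by
  refine and_congr_right fun _ ↦ ⟨fun h t ht ↦ ?_, fun h m _ hm ↦ h m hm⟩
  rcases Nat.eq_zero_or_pos t with rfl | ht0
  · exact ⟨∅, empty_subset _, rfl⟩
  · exact h t ht0 ht

theorem IsPractical.representsUpTo_sigma {n : ℕ} (h : IsPractical n) :
    RepresentsUpTo n.divisors (∑ d ∈ n.divisors, d) := by
  obtain ⟨hn, hrep⟩ := isPractical_iff.1 h
  refine RepresentsUpTo.sum_of_le_sum_lt_add_one fun a ha ↦ ?_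
  have ha0 : 0 < a := Nat.pos_of_mem_divisors ha
  obtain ⟨D, hD, hsum⟩ := hrep (a - 1) (by have := Nat.divisor_le ha; omega)
  have hDa : D ⊆ {d ∈ n.divisors | d < a} := fun d hd ↦
    mem_filter.2 ⟨hD hd, by have := single_le_sum (fun i _ ↦ Nat.zero_le i) hd; omega⟩
  have : ∑ d ∈ D, d ≤ ∑ d ∈ n.divisors with d < a, d := sum_le_sum_of_subset hDa
  omega

theorem Nat.dvd_of_dvd_prime_pow_mul_of_lt {p k M d : ℕ} (hp : p.Prime) (hd0 : 0 < d)
    (hdp : d < p) (h : d ∣ p ^ k * M) : d ∣ M := by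
  have hcop : d.Coprime p :=
    ((hp.coprime_iff_not_dvd).2 fun hpd ↦ (Nat.le_of_dvd hd0 hpd).not_gt hdp).symm
  exact (hcop.pow_right k).dvd_of_dvd_mul_left h

theorem IsPractical.prime_le_sigma_add_one {M p k : ℕ} (h : IsPractical (p ^ k * M))
    (hp : p.Prime) (hk : 1 ≤ k) : p ≤ (∑ d ∈ M.divisors, d) + 1 := by
  by_contra! hlt
  obtain ⟨hpos, hrep⟩ := isPractical_iff.1 h
  have hM : 0 < M := Nat.pos_of_mul_pos_left hpos
  have hle : (∑ d ∈ M.divisors, d) + 1 ≤ p ^ k * M :=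
    calc (∑ d ∈ M.divisors, d) + 1 ≤ p := hlt.le
      _ ≤ p ^ k := Nat.le_self_pow (by omega) p
      _ ≤ p ^ k * M := Nat.le_mul_of_pos_right _ hM
  obtain ⟨D, hD, hsum⟩ := hrep _ hle
  have hDM : D ⊆ M.divisors := fun d hd ↦ by
    have hd0 : 0 < d := Nat.pos_of_mem_divisors (hD hd)
    have hdp : d < p := by have := single_le_sum (fun i _ ↦ Nat.zero_le i) hd; omega
    exact Nat.mem_divisors.2
      ⟨Nat.dvd_of_dvd_prime_pow_mul_of_lt hp hd0 hdp (Nat.dvd_of_mem_divisors (hD hd)), hM.ne'⟩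
  have : ∑ d ∈ D, d ≤ ∑ d ∈ M.divisors, d := sum_le_sum_of_subset hDM
  omega

theorem Nat.disjoint_divisors_image_prime_mul {M p N : ℕ} (hp : p.Prime)
    (hcop : Nat.Coprime p M) : Disjoint M.divisors (N.divisors.image (p * ·)) := by
  refine disjoint_left.2 fun x hxM hx ↦ ?_
  obtain ⟨d, -, rfl⟩ := mem_image.1 hx
  exact hp.one_lt.ne' (Nat.Coprime.eq_one_of_dvd hcop
    ((dvd_mul_right p d).trans (Nat.dvd_of_mem_divisors hxM)))

theorem Nat.divisors_union_image_prime_mul_subset {M p k : ℕ} (hp : p.Prime) (hM : 0 < M) :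
    M.divisors ∪ (p ^ k * M).divisors.image (p * ·) ⊆ (p ^ (k + 1) * M).divisors := by
  have hne : p ^ (k + 1) * M ≠ 0 := (Nat.mul_pos (pow_pos hp.pos _) hM).ne'
  refine union_subset (fun d hd ↦ ?_) (fun x hx ↦ ?_)
  · exact Nat.mem_divisors.2 ⟨(Nat.dvd_of_mem_divisors hd).mul_left _, hne⟩
  · obtain ⟨d, hd, rfl⟩ := mem_image.1 hx
    refine Nat.mem_divisors.2 ⟨?_, hne⟩
    rw [pow_succ', mul_assoc]
    exact mul_dvd_mul_left p (Nat.dvd_of_mem_divisors hd)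

theorem IsPractical.representsUpTo_prime_pow_mul {M p : ℕ} (hM : IsPractical M)
    (hp : p.Prime) (hcop : Nat.Coprime p M) (hpM : p ≤ (∑ d ∈ M.divisors, d) + 1) (k : ℕ) :
    RepresentsUpTo (p ^ k * M).divisors (p ^ k * ∑ d ∈ M.divisors, d) := by
  induction k with
  | zero => simpa using hM.representsUpTo_sigma
  | succ k ih =>
    refine (hM.representsUpTo_sigma.union_image_mul ih hp.pos hpM
      (Nat.disjoint_divisors_image_prime_mul hp hcop)).mono
      (Nat.divisors_union_image_prime_mul_subset hp hM.1) ?_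
    rw [pow_succ', mul_assoc]
    exact Nat.le_add_left _ _

theorem stewart_key (M p k : ℕ) (hM : IsPractical M) (hp : p.Prime)
    (hcop : Nat.Coprime p M) (hk : 1 ≤ k) :
    IsPractical (p ^ k * M) ↔ p ≤ (∑ d ∈ M.divisors, d) + 1 := by
  refine ⟨fun h ↦ h.prime_le_sigma_add_one hp hk, fun hpM ↦ ?_⟩
  have hMσ : M ≤ ∑ d ∈ M.divisors, d :=
    single_le_sum (f := id) (fun i _ ↦ Nat.zero_le i) (Nat.mem_divisors_self M hM.1.ne')
  refine isPractical_iff.2 ⟨Nat.mul_pos (pow_pos hp.pos k) hM.1, ?_⟩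
  exact (hM.representsUpTo_prime_pow_mul hp hcop hpM k).mono subset_rfl
    (Nat.mul_le_mul_left _ hMσ)
end

section
/- Every φ-practical number is weakly φ-practical. -/
/-- A positive integer `n = p₁^{e₁} ⋯ p_k^{e_k}` (primes increasing) is weakly
φ-practical if `p_{i+1} ≤ m_i + 2` for all `i`, where `m_i = p₁^{e₁} ⋯ p_i^{e_i}`
(and `m₀ = 1`).  Equivalently, every prime `p` dividing `n` satisfies
`p ≤ (∏_{q ∣ n, q prime, q < p} q^{ν_q(n)}) + 2`. -/
def IsWeaklyPhiPractical (n : ℕ) : Prop :=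
  0 < n ∧ ∀ p : ℕ, p.Prime → p ∣ n →
    p ≤ (∏ q ∈ n.primeFactors.filter (fun q => q < p), q ^ n.factorization q) + 2

theorem phiPractical_is_weaklyPhiPractical (n : ℕ) (h : IsPhiPractical n) :
    IsWeaklyPhiPractical n := by
  obtain ⟨hn, hrep⟩ := h
  refine ⟨hn, fun p hp hpn => ?_⟩
  by_contra hlt
  push_neg at hlt
  set S := n.primeFactors.filter (fun q => q < p) with hS
  set M := ∏ q ∈ S, q ^ n.factorization q with hM
  have hn0 : n ≠ 0 := hn.ne'
  -- n as product over primeFactors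
  have hnprod : ∏ q ∈ n.primeFactors, q ^ n.factorization q = n := by
    have := Nat.factorization_prod_pow_eq_self hn0
    rwa [Finsupp.prod, Nat.support_factorization] at this
  have hMdvd : M ∣ n := by
    rw [← hnprod]
    exact Finset.prod_dvd_prod_of_subset _ _ _ (Finset.filter_subset _ _)
  have hM0 : M ≠ 0 := fun h0 => hn0 (Nat.eq_zero_of_zero_dvd (h0 ▸ hMdvd))
  have hpM : ¬ p ∣ M := by
    intro hdvd
    obtain ⟨q, hqS, hq⟩ := hp.prime.exists_mem_finset_dvd hdvd
    have hq2 : q < p := (Finset.mem_filter.mp hqS).2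
    have : p = q := by
      have hqp : q.Prime := Nat.prime_of_mem_primeFactors (Finset.mem_filter.mp hqS).1
      exact (Nat.prime_dvd_prime_iff_eq hp hqp).mp (hp.dvd_of_dvd_pow hq)
    omega
  have hMn : M < n := lt_of_le_of_ne (Nat.le_of_dvd hn hMdvd)
    (fun he => hpM (he ▸ hpn))
  -- factorization of M
  have hMfact : ∀ q ∈ S, M.factorization q = n.factorization q := by
    intro q hqS
    have hall : ∀ x ∈ S, x ^ n.factorization x ≠ 0 := by
      intro x hx
      exact pow_ne_zero _ (Nat.prime_of_mem_primeFactors (Finset.mem_filter.mp hx).1).ne_zero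
    rw [hM, Nat.factorization_prod hall]
    rw [Finset.sum_apply']
    rw [Finset.sum_eq_single q]
    · rw [Nat.Prime.factorization_pow (Nat.prime_of_mem_primeFactors (Finset.mem_filter.mp hqS).1),
        Finsupp.single_apply, if_pos rfl]
    · intro b hb hbq
      rw [Nat.Prime.factorization_pow (Nat.prime_of_mem_primeFactors (Finset.mem_filter.mp hb).1),
        Finsupp.single_apply, if_neg hbq]
    · intro habs; exact absurd hqS habs
  -- get representation of M+1
  obtain ⟨D, hD, hsum⟩ := hrep (M + 1) (by omega) (by omega)
  -- every d in D divides M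
  have hdM : ∀ d ∈ D, d ∣ M := by
    intro d hdD
    have hdn : d ∣ n := (Nat.mem_divisors.mp (hD hdD)).1
    have hd0 : d ≠ 0 := fun h0 => hn0 (Nat.eq_zero_of_zero_dvd (h0 ▸ hdn))
    -- every prime factor of d is < p
    have hsmall : ∀ q, q.Prime → q ∣ d → q < p := by
      intro q hq hqd
      by_contra hge
      push_neg at hge
      -- then totient d ≥ q - 1 ≥ p - 1 > M + 1
      have h1 : q.totient ∣ d.totient := Nat.totient_dvd_of_dvd hqd
      have h2 : 0 < d.totient := Nat.totient_pos.mpr (Nat.pos_of_ne_zero hd0)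
      have h3 : q - 1 ≤ d.totient := by
        rw [← Nat.totient_prime hq]
        exact Nat.le_of_dvd h2 h1
      have h4 : d.totient ≤ M + 1 := by
        rw [hsum]
        exact Finset.single_le_sum (fun i _ => Nat.zero_le _) hdD
      omega
    rw [← Nat.factorization_le_iff_dvd hd0 hM0]
    intro q
    rcases Nat.eq_zero_or_pos (d.factorization q) with h0 | hpos
    · simp [h0]
    · have hq : q.Prime := Nat.prime_of_mem_primeFactors
        (Nat.support_factorization d ▸ Finsupp.mem_support_iff.mpr hpos.ne')
      have hqd : q ∣ d := Nat.dvd_of_factorization_pos hpos.ne'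
      have hqS : q ∈ S := Finset.mem_filter.mpr
        ⟨Nat.mem_primeFactors.mpr ⟨hq, hqd.trans hdn, hn0⟩, hsmall q hq hqd⟩
      calc d.factorization q ≤ n.factorization q :=
            (Nat.factorization_le_iff_dvd hd0 hn0).mpr hdn q
        _ = M.factorization q := (hMfact q hqS).symm
  -- hence D ⊆ M.divisors, so sum ≤ M, contradiction
  have hDM : D ⊆ M.divisors := by
    intro d hdD
    exact Nat.mem_divisors.mpr ⟨hdM d hdD, hM0⟩
  have : M + 1 ≤ M := by
    rw [hsum, ← Nat.sum_totient M]
    exact Finset.sum_le_sum_of_subset hDM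
  omega
end

section
/- Every even weakly φ-practical number is practical. -/
open Finset

/-- Strengthened practicality: every `m ≤ σ(n)` (including 0) is a sum of
distinct divisors of `n`. -/
def StrongPractical (n : ℕ) : Prop :=
  ∀ m : ℕ, m ≤ ∑ d ∈ n.divisors, d →
    ∃ D : Finset ℕ, D ⊆ n.divisors ∧ m = ∑ d ∈ D, d

lemma strongPractical_one : StrongPractical 1 := by
  intro m hm
  simp only [Nat.divisors_one, Finset.sum_singleton] at hm
  interval_cases m
  · exact ⟨∅, by simp⟩
  · exact ⟨{1}, by simp⟩

lemma geom_aux (p S : ℕ) (h : p ≤ S + 1) :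
    ∀ e, p ^ (e + 1) ≤ S * (∑ i ∈ Finset.range (e + 1), p ^ i) + 1 := by
  intro e
  induction e with
  | zero => simpa using h
  | succ e ih =>
    rw [Finset.sum_range_succ, Nat.mul_add]
    calc p ^ (e + 1 + 1) = p ^ (e + 1) * p := by ring
      _ ≤ p ^ (e + 1) * (S + 1) := Nat.mul_le_mul_left _ h
      _ = S * p ^ (e + 1) + p ^ (e + 1) := by ring
      _ ≤ S * p ^ (e + 1) + (S * ∑ i ∈ Finset.range (e + 1), p ^ i + 1) := by omega
      _ = S * ∑ i ∈ Finset.range (e + 1), p ^ i + S * p ^ (e + 1) + 1 := by ring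

lemma strongPractical_mul_prime_pow (m p : ℕ) (hm : 0 < m) (hp : p.Prime)
    (hpm : ¬ p ∣ m) (hple : p ≤ (∑ d ∈ m.divisors, d) + 1) (hSP : StrongPractical m) :
    ∀ e, StrongPractical (m * p ^ e) := by
  have hcop : ∀ k : ℕ, Nat.Coprime m (p ^ k) :=
    fun k => Nat.Coprime.pow_right k ((hp.coprime_iff_not_dvd.mpr hpm).symm)
  intro e
  induction e with
  | zero => simpa using hSP
  | succ e ih =>
    intro x hx
    set P := p ^ (e + 1) with hPdef
    have hPpos : 0 < P := pow_pos hp.pos _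
    have hNpos : 0 < m * p ^ e := Nat.mul_pos hm (pow_pos hp.pos _)
    have hN'pos : 0 < m * P := Nat.mul_pos hm hPpos
    -- sigma values
    set Sm := ∑ d ∈ m.divisors, d with hSmdef
    have hSNe : ∑ d ∈ (m * p ^ e).divisors, d = Sm * ∑ d ∈ (p ^ e).divisors, d :=
      (hcop e).sum_divisors_mul
    have hsum_pe : ∑ d ∈ (p ^ e).divisors, d = ∑ i ∈ Finset.range (e + 1), p ^ i := by
      rw [Nat.sum_divisors_prime_pow hp]
    have hsum_pe1 : ∑ d ∈ (P).divisors, d = (∑ d ∈ (p ^ e).divisors, d) + P := by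
      rw [hPdef, Nat.sum_divisors_prime_pow hp, Nat.sum_divisors_prime_pow hp,
        Finset.sum_range_succ]
    have hsplit : ∑ d ∈ (m * P).divisors, d = (∑ d ∈ (m * p ^ e).divisors, d) + Sm * P := by
      rw [(hcop (e + 1)).sum_divisors_mul, hsum_pe1, hSNe, Nat.mul_add]
    have hgeo : P ≤ (∑ d ∈ (m * p ^ e).divisors, d) + 1 := by
      have h1 : p - 1 ≤ Sm := by omega
      have := geom_aux p (p - 1) (by omega) e
      have h2 := geom_aux p Sm hple e
      rw [hSNe, hsum_pe]
      exact h2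
    -- decomposition x = q * P + r
    obtain ⟨q, r, hq, hr, hxqr⟩ :
        ∃ q r : ℕ, q ≤ Sm ∧ r ≤ (∑ d ∈ (m * p ^ e).divisors, d) ∧ x = q * P + r := by
      rcases le_or_gt (x / P) Sm with hc | hc
      · refine ⟨x / P, x % P, hc, ?_, ?_⟩
        · exact Nat.lt_succ_iff.mp (lt_of_lt_of_le (Nat.mod_lt x hPpos) hgeo)
        · exact (Nat.div_add_mod' x P).symm
      · have hSmP : Sm * P ≤ x := (Nat.le_div_iff_mul_le hPpos).mp hc.le
        refine ⟨Sm, x - Sm * P, le_refl _, ?_, by omega⟩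
        have hx' : x ≤ (∑ d ∈ (m * p ^ e).divisors, d) + Sm * P := by
          rw [← hsplit]; exact hx
        omega
    -- represent q by divisors of m, r by divisors of m * p ^ e
    obtain ⟨Dq, hDq, hDqsum⟩ := hSP q hq
    obtain ⟨Dr, hDr, hDrsum⟩ := ih r hr
    refine ⟨Dr ∪ Dq.image (· * P), ?_, ?_⟩
    · intro d hd
      rcases Finset.mem_union.mp hd with hd | hd
      · exact Nat.divisors_subset_of_dvd hN'pos.ne'
          (mul_dvd_mul_left m (pow_dvd_pow p (Nat.le_succ e))) (hDr hd)
      · obtain ⟨a, ha, rfl⟩ := Finset.mem_image.mp hd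
        have : a ∣ m := (Nat.mem_divisors.mp (hDq ha)).1
        exact Nat.mem_divisors.mpr ⟨mul_dvd_mul this dvd_rfl, hN'pos.ne'⟩
    · have hdisj : Disjoint Dr (Dq.image (· * P)) := by
        rw [Finset.disjoint_right]
        intro d hd hdr
        obtain ⟨a, ha, rfl⟩ := Finset.mem_image.mp hd
        have hdvd1 : a * P ∣ m * p ^ e := (Nat.mem_divisors.mp (hDr hdr)).1
        have hdvd2 : P ∣ m * p ^ e := dvd_trans (dvd_mul_left P a) hdvd1
        have hle : e + 1 ≤ (m * p ^ e).factorization p :=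
          (Nat.Prime.pow_dvd_iff_le_factorization hp hNpos.ne').mp hdvd2
        rw [Nat.factorization_mul hm.ne' (pow_pos hp.pos e).ne'] at hle
        simp only [Finsupp.coe_add, Pi.add_apply, hp.factorization_pow,
          Finsupp.single_eq_same, Nat.factorization_eq_zero_of_not_dvd hpm] at hle
        omega
      rw [Finset.sum_union hdisj, Finset.sum_image
        (fun a _ b _ h => Nat.eq_of_mul_eq_mul_right hPpos h), ← Finset.sum_mul,
        ← hDqsum, ← hDrsum]
      omega

lemma main_aux : ∀ n : ℕ, 2 ∣ n → IsWeaklyPhiPractical n → StrongPractical n := by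
  intro n
  induction n using Nat.strong_induction_on with
  | _ n IH =>
    intro heven h
    obtain ⟨hn0, hwp⟩ := h
    have hn2 : 2 ≤ n := Nat.le_of_dvd hn0 heven
    have hne : n.primeFactors.Nonempty := Nat.nonempty_primeFactors.mpr (by omega)
    set p := n.primeFactors.max' hne with hpdef
    have hpmem : p ∈ n.primeFactors := Finset.max'_mem _ _
    have hp : p.Prime := Nat.prime_of_mem_primeFactors hpmem
    have hpdvd : p ∣ n := Nat.dvd_of_mem_primeFactors hpmem
    have he : 0 < n.factorization p := hp.factorization_pos_of_dvd hn0.ne' hpdvd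
    have hm0 : 0 < ordCompl[p] n := Nat.ordCompl_pos p hn0.ne'
    have hnm : p ^ n.factorization p * ordCompl[p] n = n := Nat.ordProj_mul_ordCompl_eq_self n p
    have hpm : ¬ p ∣ ordCompl[p] n := Nat.not_dvd_ordCompl hp hn0.ne'
    have hmax : ∀ q ∈ n.primeFactors, q ≤ p := fun q hq => Finset.le_max' _ q hq
    have hmpf : (ordCompl[p] n).primeFactors = n.primeFactors.erase p := by
      rw [← Nat.support_factorization, Nat.factorization_ordCompl, Finsupp.support_erase,
        Nat.support_factorization]
    have hvm : ∀ r, r ≠ p → (ordCompl[p] n).factorization r = n.factorization r := by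
      intro r hr
      rw [Nat.factorization_ordCompl, Finsupp.erase_ne hr]
    -- the filtered product at p equals ordCompl[p] n
    have hprodm : ∏ r ∈ n.primeFactors.filter (fun r => r < p), r ^ n.factorization r
        = ordCompl[p] n := by
      have h1 : n.primeFactors.filter (fun r => r < p) = n.primeFactors.erase p := by
        ext r
        simp only [Finset.mem_filter, Finset.mem_erase]
        constructor
        · rintro ⟨hr, hrp⟩; exact ⟨by omega, hr⟩
        · rintro ⟨hr, hrm⟩
          exact ⟨hrm, lt_of_le_of_ne (hmax r hrm) hr⟩
      have h2 : ∏ r ∈ n.primeFactors, r ^ n.factorization r = n :=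
        Nat.factorization_prod_pow_eq_self hn0.ne'
      have h3 := Finset.mul_prod_erase n.primeFactors (fun r => r ^ n.factorization r) hpmem
      rw [h2] at h3
      rw [h1]
      exact (Nat.div_eq_of_eq_mul_right (pow_pos hp.pos _) h3.symm).symm
    have hplem : p ≤ ordCompl[p] n + 2 := by
      have := hwp p hp hpdvd
      rwa [hprodm] at this
    by_cases hm1 : ordCompl[p] n = 1
    · -- n = p ^ e with p = 2
      have hmeq : p ^ n.factorization p = n := by
        conv_rhs => rw [← hnm, hm1, mul_one]
      have h2d : 2 ∣ p ^ n.factorization p := by rw [hmeq]; exact heven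
      have hp2 : p = 2 :=
        ((Nat.prime_dvd_prime_iff_eq Nat.prime_two hp).mp
          (Nat.Prime.dvd_of_dvd_pow Nat.prime_two h2d)).symm
      have hple1 : p ≤ (∑ d ∈ (1 : ℕ).divisors, d) + 1 := by
        simp [Nat.divisors_one, hp2]
      have := strongPractical_mul_prime_pow 1 p one_pos hp (Nat.Prime.not_dvd_one hp)
        hple1 strongPractical_one (n.factorization p)
      rwa [one_mul, hmeq] at this
    · have hm2 : 2 ≤ ordCompl[p] n := by omega
      have hpne2 : p ≠ 2 := by
        intro hp2
        obtain ⟨q, hq, hqd⟩ := Nat.exists_prime_and_dvd hm1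
        have hqmem : q ∈ (ordCompl[p] n).primeFactors :=
          Nat.mem_primeFactors.mpr ⟨hq, hqd, hm0.ne'⟩
        rw [hmpf, Finset.mem_erase] at hqmem
        have := hmax q hqmem.2
        have := hq.two_le
        omega
      have heven_m : 2 ∣ ordCompl[p] n := by
        have hd : 2 ∣ p ^ n.factorization p * ordCompl[p] n := by rw [hnm]; exact heven
        have hcop : Nat.Coprime 2 (p ^ n.factorization p) :=
          Nat.Coprime.pow_right _ ((Nat.coprime_primes Nat.prime_two hp).mpr (Ne.symm hpne2))
        exact hcop.dvd_of_dvd_mul_left hd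
      have hwpm : IsWeaklyPhiPractical (ordCompl[p] n) := by
        refine ⟨hm0, fun q hq hqm => ?_⟩
        have hqn : q ∣ n := hqm.trans (Nat.ordCompl_dvd n p)
        have hqmem : q ∈ n.primeFactors := Nat.mem_primeFactors.mpr ⟨hq, hqn, hn0.ne'⟩
        have hqp : q < p :=
          lt_of_le_of_ne (hmax q hqmem) (fun hqe => hpm (hqe ▸ hqm))
        have hthis := hwp q hq hqn
        have hsets : (ordCompl[p] n).primeFactors.filter (fun r => r < q)
            = n.primeFactors.filter (fun r => r < q) := by
          rw [hmpf]
          ext r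
          simp only [Finset.mem_filter, Finset.mem_erase]
          constructor
          · rintro ⟨⟨-, hr⟩, hrq⟩; exact ⟨hr, hrq⟩
          · rintro ⟨hr, hrq⟩; exact ⟨⟨by omega, hr⟩, hrq⟩
        have hprods : ∏ r ∈ (ordCompl[p] n).primeFactors.filter (fun r => r < q),
              r ^ (ordCompl[p] n).factorization r
            = ∏ r ∈ n.primeFactors.filter (fun r => r < q), r ^ n.factorization r := by
          rw [hsets]
          refine Finset.prod_congr rfl (fun r hr => ?_)
          have : r < q := (Finset.mem_filter.mp hr).2
          rw [hvm r (by omega)]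
        rw [hprods]
        exact hthis
      have hmlt : ordCompl[p] n < n := by
        conv_rhs => rw [← hnm]
        exact lt_mul_of_one_lt_left hm0 (Nat.one_lt_pow he.ne' hp.one_lt)
      have hSPm := IH _ hmlt heven_m hwpm
      have hSm : ordCompl[p] n + 1 ≤ ∑ d ∈ (ordCompl[p] n).divisors, d := by
        have h1 : (1 : ℕ) ∈ (ordCompl[p] n).divisors := Nat.one_mem_divisors.mpr hm0.ne'
        have h2 : ordCompl[p] n ∈ (ordCompl[p] n).divisors := Nat.mem_divisors_self _ hm0.ne'
        have hsum := Finset.sum_le_sum_of_subset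
          (Finset.insert_subset h2 (Finset.singleton_subset_iff.mpr h1))
          (f := fun d => d)
        rwa [Finset.sum_pair (by omega : ordCompl[p] n ≠ 1)] at hsum
      have hple : p ≤ (∑ d ∈ (ordCompl[p] n).divisors, d) + 1 := by omega
      have := strongPractical_mul_prime_pow (ordCompl[p] n) p hm0 hp hpm hple hSPm
        (n.factorization p)
      rwa [mul_comm, hnm] at this

theorem even_weaklyPhiPractical_is_practical (n : ℕ)
    (heven : 2 ∣ n) (h : IsWeaklyPhiPractical n) : IsPractical n := by
  have hSP := main_aux n heven h
  refine ⟨h.1, fun m hm1 hmn => ?_⟩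
  have hmσ : m ≤ ∑ d ∈ n.divisors, d :=
    le_trans hmn (Finset.single_le_sum (f := fun d => d) (fun i _ => Nat.zero_le i)
      (Nat.mem_divisors_self n h.1.ne'))
  exact hSP m hmσ
end

section
/- For all x ≥ 1, F(x) ≤ PR(2x); that is, the number of φ-practical integers up to x is at most the number of practical integers up to 2x. -/
/-- `phiPracticalCount x` is the number of φ-practical integers `n ≤ x`. -/
noncomputable def phiPracticalCount (x : ℝ) : ℕ :=
  Nat.card {n : ℕ | (n : ℝ) ≤ x ∧ IsPhiPractical n}

/-- `practicalCount x` is the number of practical integers `n ≤ x`. -/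
noncomputable def practicalCount (x : ℝ) : ℕ :=
  Nat.card {n : ℕ | (n : ℝ) ≤ x ∧ IsPractical n}

open Finset
open scoped Nat

namespace Nat

theorem sum_divisors_mul_prime_pow {M p : ℕ} (hp : p.Prime) (hpM : ¬ p ∣ M) (a : ℕ) :
    ∑ i ∈ (M * p ^ a).divisors, i = (∑ i ∈ M.divisors, i) * ∑ i ∈ range (a + 1), p ^ i := by
  rw [Coprime.sum_divisors_mul ((hp.coprime_iff_not_dvd.mpr hpM).symm.pow_right a),
    sum_divisors_prime_pow hp]

theorem le_sum_divisors {n : ℕ} (hn : n ≠ 0) : n ≤ ∑ i ∈ n.divisors, i :=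
  single_le_sum (f := fun i => i) (fun _ _ => zero_le _) (mem_divisors_self n hn)

theorem dvd_of_dvd_pow_mul_of_mem_smoothNumbers {p d M e : ℕ} (hp : p.Prime)
    (hd : d ∈ p.smoothNumbers) (hdM : d ∣ p ^ e * M) : d ∣ M :=
  ((hp.smoothNumbers_coprime hd).pow_left e).symm.dvd_of_dvd_mul_left hdM

def smoothPart (n p : ℕ) : ℕ :=
  (n.factorization.filter (· < p)).prod (· ^ ·)

theorem factorization_smoothPart (n p : ℕ) :
    (n.smoothPart p).factorization = n.factorization.filter (· < p) :=
  prod_pow_factorization_eq_self fun q hq => by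
    rw [Finsupp.support_filter, mem_filter, support_factorization] at hq
    exact prime_of_mem_primeFactors hq.1

theorem smoothPart_ne_zero (n p : ℕ) : n.smoothPart p ≠ 0 :=
  prod_ne_zero_iff.mpr fun _ hq =>
    pow_ne_zero _ (prime_of_mem_primeFactors (mem_filter.mp hq).1).ne_zero

theorem smoothPart_dvd (n p : ℕ) : n.smoothPart p ∣ n := by
  rcases eq_or_ne n 0 with rfl | hn
  · exact dvd_zero _
  refine (factorization_le_iff_dvd (smoothPart_ne_zero n p) hn).mp fun q => ?_
  rw [factorization_smoothPart, Finsupp.filter_apply]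
  split_ifs <;> simp

theorem smoothPart_mem_smoothNumbers (n p : ℕ) : n.smoothPart p ∈ p.smoothNumbers := by
  refine mem_smoothNumbers'.mpr fun q hq hqd => ?_
  have := (hq.dvd_iff_one_le_factorization (smoothPart_ne_zero n p)).mp hqd
  rw [factorization_smoothPart, Finsupp.filter_apply] at this
  split_ifs at this with hqp
  · exact hqp
  · omega

theorem dvd_smoothPart {n p d : ℕ} (hn : n ≠ 0) (hdn : d ∣ n) (hd : d ∈ p.smoothNumbers) :
    d ∣ n.smoothPart p := by
  refine (factorization_le_iff_dvd hd.1 (smoothPart_ne_zero n p)).mp fun q => ?_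
  rw [factorization_smoothPart, Finsupp.filter_apply]
  split_ifs with hqp
  · exact (factorization_le_iff_dvd hd.1 hn).mpr hdn q
  · by_cases hq : q.Prime
    · exact (factorization_eq_zero_of_not_dvd fun hqd =>
        hqp (mem_smoothNumbers'.mp hd q hq hqd)).le
    · simp [factorization_eq_zero_of_not_prime d hq]

theorem mem_smoothNumbers_of_totient_add_one_lt {d p : ℕ} (hd : d ≠ 0) (h : φ d + 1 < p) :
    d ∈ p.smoothNumbers :=
  mem_smoothNumbers'.mpr fun q hq hqd => by
    have := le_of_dvd (totient_pos.mpr (pos_of_ne_zero hd)) (totient_dvd_of_dvd hqd)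
    rw [totient_prime hq] at this
    omega

end Nat

def IsSumComplete (S : Finset ℕ) : Prop :=
  ∀ m ≤ ∑ i ∈ S, i, ∃ T ⊆ S, m = ∑ i ∈ T, i

namespace IsSumComplete

theorem of_subset {S U : Finset ℕ} (hS : IsSumComplete S) (hSU : S ⊆ U)
    (hsum : ∑ i ∈ U, i ≤ ∑ i ∈ S, i) : IsSumComplete U := fun m hm =>
  let ⟨T, hTS, hT⟩ := hS m (hm.trans hsum)
  ⟨T, hTS.trans hSU, hT⟩

theorem union_image_mul {S T : Finset ℕ} {k : ℕ} (hS : IsSumComplete S)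
    (hT : IsSumComplete T) (hk : 0 < k) (hkS : k ≤ ∑ i ∈ S, i + 1)
    (hdisj : Disjoint S (T.image (k * ·))) : IsSumComplete (S ∪ T.image (k * ·)) := by
  have hsum : ∀ U : Finset ℕ, ∑ i ∈ U.image (k * ·), i = k * ∑ i ∈ U, i := fun U => by
    rw [sum_image fun a _ b _ h => Nat.eq_of_mul_eq_mul_left hk h, mul_sum]
  intro m hm
  rw [sum_union hdisj, hsum T] at hm
  -- take as many multiples of `k` as `T` allows; what is left is at most `∑ S`
  have hchoice := min_choice (m / k) (∑ i ∈ T, i)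
  set c := min (m / k) (∑ i ∈ T, i)
  have hck : k * c ≤ m :=
    (Nat.mul_le_mul_left k (min_le_left _ _)).trans (Nat.mul_div_le m k)
  have hr : m - k * c ≤ ∑ i ∈ S, i := by
    rcases hchoice with h | h <;> rw [h] at hck ⊢
    · have := Nat.mod_lt m hk
      have := Nat.div_add_mod m k
      omega
    · omega
  obtain ⟨U, hUT, hU⟩ := hT c (min_le_right _ _)
  obtain ⟨V, hVS, hV⟩ := hS (m - k * c) hr
  refine ⟨V ∪ U.image (k * ·), union_subset_union hVS (image_subset_image hUT), ?_⟩
  rw [sum_union (hdisj.mono hVS (image_subset_image hUT)), hsum U, ← hU, ← hV]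
  omega

end IsSumComplete

theorem isSumComplete_divisors_mul_prime_pow {M p : ℕ} (hM : IsSumComplete M.divisors)
    (hp : p.Prime) (hpM : ¬ p ∣ M) (hpσ : p ≤ ∑ i ∈ M.divisors, i + 1) (a : ℕ) :
    IsSumComplete (M * p ^ a).divisors := by
  induction a with
  | zero => simpa using hM
  | succ a ih =>
    have hMp0 : M * p ^ (a + 1) ≠ 0 := by
      refine mul_ne_zero ?_ (pow_ne_zero _ hp.ne_zero)
      rintro rfl
      simp only [Nat.divisors_zero, sum_empty] at hpσ
      exact hp.one_lt.not_ge hpσ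
    have hk : p ^ (a + 1) ≤ ∑ i ∈ (M * p ^ a).divisors, i + 1 := by
      have hgeom := geom_sum_mul_of_one_le hp.one_le (a + 1)
      have : (∑ i ∈ range (a + 1), p ^ i) * (p - 1) ≤
          (∑ i ∈ range (a + 1), p ^ i) * ∑ i ∈ M.divisors, i :=
        Nat.mul_le_mul_left _ (by omega)
      rw [Nat.sum_divisors_mul_prime_pow hp hpM, mul_comm]
      have := Nat.one_le_pow (a + 1) p hp.pos
      omega
    have hdisj : Disjoint (M * p ^ a).divisors (M.divisors.image (p ^ (a + 1) * ·)) := by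
      refine disjoint_right.mpr fun e he hea => hpM ?_
      obtain ⟨d, -, rfl⟩ := mem_image.mp he
      have : p ^ a * p ∣ p ^ a * M := by
        rw [← pow_succ, mul_comm (p ^ a)]
        exact (dvd_mul_right _ d).trans (Nat.dvd_of_mem_divisors hea)
      exact Nat.dvd_of_mul_dvd_mul_left (pow_pos hp.pos a) this
    refine (ih.union_image_mul hM (pow_pos hp.pos _) hk hdisj).of_subset ?_ ?_
    · refine union_subset (Nat.divisors_subset_of_dvd hMp0
        (mul_dvd_mul_left M (pow_dvd_pow p a.le_succ))) fun e he => ?_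
      obtain ⟨d, hd, rfl⟩ := mem_image.mp he
      exact Nat.mem_divisors.mpr
        ⟨mul_comm M _ ▸ mul_dvd_mul_left _ (Nat.dvd_of_mem_divisors hd), hMp0⟩
    · rw [sum_union hdisj, sum_image fun _ _ _ _ h => Nat.eq_of_mul_eq_mul_left
        (pow_pos hp.pos _) h, ← mul_sum, Nat.sum_divisors_mul_prime_pow hp hpM,
        Nat.sum_divisors_mul_prime_pow hp hpM, sum_range_succ]
      apply le_of_eq
      ring

theorem isSumComplete_divisors_one : IsSumComplete (Nat.divisors 1) := by
  intro m hm
  simp only [Nat.divisors_one, sum_singleton] at hm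
  interval_cases m
  · exact ⟨∅, empty_subset _, rfl⟩
  · exact ⟨{1}, subset_rfl, rfl⟩

/-- The Stewart–Sierpiński criterion. -/
theorem isSumComplete_divisors_of_mem_smoothNumbers {B N : ℕ} (hN : N ∈ B.smoothNumbers)
    (h : ∀ p, p.Prime → p ∣ N →
      ∃ d, d ∣ N ∧ d ∈ p.smoothNumbers ∧ p ≤ ∑ i ∈ d.divisors, i + 1) :
    IsSumComplete N.divisors := by
  induction B generalizing N with
  | zero =>
    rw [Nat.smoothNumbers_zero, Set.mem_singleton_iff] at hN
    exact hN ▸ isSumComplete_divisors_one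
  | succ B ih =>
    by_cases hB : B.Prime
    swap
    · exact ih (Nat.smoothNumbers_succ hB ▸ hN) h
    obtain ⟨⟨e, M, hM⟩, hNeM⟩ := (Nat.equivProdNatSmoothNumbers hB).surjective ⟨N, hN⟩
    obtain rfl : B ^ e * M = N := congrArg Subtype.val hNeM
    have hMcomplete : IsSumComplete M.divisors := by
      refine ih hM fun q hq hqM => ?_
      have hqB := Nat.mem_smoothNumbers'.mp hM q hq hqM
      obtain ⟨d, hdN, hdq, hqd⟩ := h q hq (dvd_mul_of_dvd_right hqM _)
      exact ⟨d, Nat.dvd_of_dvd_pow_mul_of_mem_smoothNumbers hB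
        (Nat.smoothNumbers_mono hqB.le hdq) hdN, hdq, hqd⟩
    rcases Nat.eq_zero_or_pos e with rfl | he
    · simpa using hMcomplete
    obtain ⟨d, hdN, hdB, hBd⟩ := h B hB (dvd_mul_of_dvd_left (dvd_pow_self B he.ne') M)
    have hdM := Nat.dvd_of_dvd_pow_mul_of_mem_smoothNumbers hB hdB hdN
    have hBM : ¬ B ∣ M := (hB.coprime_iff_not_dvd).mp (hB.smoothNumbers_coprime hM)
    rw [mul_comm]
    refine isSumComplete_divisors_mul_prime_pow hMcomplete hB hBM ?_ e
    exact hBd.trans (Nat.add_le_add_right (sum_le_sum_of_subset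
      (Nat.divisors_subset_of_dvd hM.1 hdM)) 1)

theorem IsPhiPractical.le_smoothPart_add_two {n p : ℕ} (hn : IsPhiPractical n) (hpn : p ≤ n) :
    p ≤ n.smoothPart p + 2 := by
  by_contra! hlt
  set P := n.smoothPart p
  obtain ⟨hn0, hrep⟩ := hn
  obtain ⟨D, hDn, hD⟩ := hrep (P + 1) (Nat.le_add_left 1 P) (by omega)
  have hDP : D ⊆ P.divisors := fun d hd => by
    obtain ⟨hdn, -⟩ := Nat.mem_divisors.mp (hDn hd)
    have hφ : φ d ≤ P + 1 := hD ▸ single_le_sum (fun _ _ => Nat.zero_le _) hd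
    have hd0 : d ≠ 0 := ne_zero_of_dvd_ne_zero hn0.ne' hdn
    exact Nat.mem_divisors.mpr ⟨Nat.dvd_smoothPart hn0.ne' hdn
      (Nat.mem_smoothNumbers_of_totient_add_one_lt hd0 (by omega)), Nat.smoothPart_ne_zero n p⟩
  have : P + 1 ≤ P := calc
    P + 1 = ∑ d ∈ D, φ d := hD
    _ ≤ ∑ d ∈ P.divisors, φ d := sum_le_sum_of_subset hDP
    _ = P := Nat.sum_totient P
  omega

theorem IsPhiPractical.isPractical_two_mul {n : ℕ} (hn : IsPhiPractical n) :
    IsPractical (2 * n) := by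
  have hn0 : 2 * n ≠ 0 := by have := hn.1; omega
  have hcomplete : IsSumComplete (2 * n).divisors := by
    refine isSumComplete_divisors_of_mem_smoothNumbers
      (Nat.mem_smoothNumbers_of_lt (Nat.pos_of_ne_zero hn0) (2 * n).lt_succ_self) fun p hp hpn => ?_
    rcases eq_or_ne p 2 with rfl | hp2
    · exact ⟨1, one_dvd _, Nat.mem_smoothNumbers_of_lt one_pos one_lt_two, by simp⟩
    have hpn : p ∣ n := ((Nat.Prime.dvd_mul hp).mp hpn).resolve_left fun h =>
      hp2 ((Nat.prime_dvd_prime_iff_eq hp Nat.prime_two).mp h)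
    have h2p : 2 < p := lt_of_le_of_ne hp.two_le hp2.symm
    refine ⟨2 * n.smoothPart p, mul_dvd_mul_left 2 (Nat.smoothPart_dvd n p),
      Nat.mul_mem_smoothNumbers (Nat.mem_smoothNumbers_of_lt two_pos h2p)
        (Nat.smoothPart_mem_smoothNumbers n p), ?_⟩
    have := hn.le_smoothPart_add_two (Nat.le_of_dvd hn.1 hpn)
    have := Nat.le_sum_divisors (mul_ne_zero two_ne_zero (Nat.smoothPart_ne_zero n p))
    omega
  exact ⟨Nat.pos_of_ne_zero hn0, fun m _ hm => hcomplete m (hm.trans (Nat.le_sum_divisors hn0))⟩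

theorem phiPracticalCount_le_practicalCount_general (x : ℝ) :
    phiPracticalCount x ≤ practicalCount (2 * x) := by
  rw [phiPracticalCount, practicalCount, Nat.card_coe_set_eq, Nat.card_coe_set_eq]
  have hfin : {n : ℕ | (n : ℝ) ≤ 2 * x ∧ IsPractical n}.Finite :=
    (Set.finite_Iic ⌊2 * x⌋₊).subset fun n hn => Nat.le_floor hn.1
  refine Set.ncard_le_ncard_of_injOn (2 * ·) ?_ (fun a _ b _ h => by simpa using h) hfin
  rintro n ⟨hnx, hn⟩
  exact ⟨by push_cast; linarith, hn.isPractical_two_mul⟩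

theorem phiPracticalCount_le_practicalCount (x : ℝ) (hx : 1 ≤ x) :
    phiPracticalCount x ≤ practicalCount (2 * x) :=
  phiPracticalCount_le_practicalCount_general x
end

section
/- Let M be a φ-practical number and let p be a prime with gcd(p, M) = 1. Then p·M is φ-practical if and only if p ≤ M + 2; moreover, for every k ≥ 2, p^k·M is φ-practical if and only if p ≤ M + 1. -/
lemma phiPractical_rep {N : ℕ} (h : IsPhiPractical N) :
    ∀ m, m ≤ N → ∃ D : Finset ℕ, D ⊆ N.divisors ∧ m = ∑ d ∈ D, Nat.totient d := by
  intro m hm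
  rcases Nat.eq_zero_or_pos m with rfl | hm1
  · exact ⟨∅, by simp, by simp⟩
  · exact h.2 m hm1 hm

/-- Key step: combine a representation mod `p^k * M` with a representation of `s ≤ M`
scaled by `φ(p^(k+1)) = p^k * (p-1)`. -/
lemma step_rep (p M k : ℕ) (hp : p.Prime) (hcop : Nat.Coprime p M) (hM0 : M ≠ 0)
    (hrepM : ∀ s, s ≤ M → ∃ D : Finset ℕ, D ⊆ M.divisors ∧ s = ∑ d ∈ D, Nat.totient d)
    (ih : ∀ r, r ≤ p ^ k * M →
      ∃ D : Finset ℕ, D ⊆ (p ^ k * M).divisors ∧ r = ∑ d ∈ D, Nat.totient d)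
    (s r : ℕ) (hs : s ≤ M) (hr : r ≤ p ^ k * M) :
    ∃ D : Finset ℕ, D ⊆ (p ^ (k + 1) * M).divisors ∧
      r + p ^ k * (p - 1) * s = ∑ d ∈ D, Nat.totient d := by
  obtain ⟨D1, hD1, h1⟩ := ih r hr
  obtain ⟨D2, hD2, h2⟩ := hrepM s hs
  have hp0 : 0 < p := hp.pos
  have hpk1 : (0:ℕ) < p ^ (k + 1) := pow_pos hp0 _
  have hN0 : p ^ (k + 1) * M ≠ 0 := Nat.mul_ne_zero hpk1.ne' hM0
  have hd2dvd : ∀ d ∈ D2, d ∣ M := fun d hd => (Nat.mem_divisors.mp (hD2 hd)).1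
  have hinj : ∀ a ∈ D2, ∀ b ∈ D2, p ^ (k+1) * a = p ^ (k+1) * b → a = b := by
    intro a _ b _ hab
    exact Nat.eq_of_mul_eq_mul_left hpk1 hab
  have hdisj : Disjoint D1 (D2.image (fun d => p ^ (k+1) * d)) := by
    rw [Finset.disjoint_left]
    intro x hx1 hx2
    obtain ⟨d, _, rfl⟩ := Finset.mem_image.mp hx2
    have hxd : p ^ (k+1) * d ∣ p ^ k * M := (Nat.mem_divisors.mp (hD1 hx1)).1
    have h2 : p ^ (k+1) ∣ p ^ k * M := (dvd_mul_right _ d).trans hxd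
    rw [pow_succ] at h2
    obtain ⟨c, hc⟩ := h2
    have : M = p * c := by
      have := hc
      rw [mul_assoc] at this
      exact Nat.eq_of_mul_eq_mul_left (pow_pos hp0 k) this
    have hpM : p ∣ M := ⟨c, this⟩
    exact hp.one_lt.ne' (Nat.Coprime.eq_one_of_dvd hcop hpM)
  refine ⟨D1 ∪ D2.image (fun d => p ^ (k+1) * d), ?_, ?_⟩
  · apply Finset.union_subset
    · exact hD1.trans (Nat.divisors_subset_of_dvd hN0
        (mul_dvd_mul_right (pow_dvd_pow p (Nat.le_succ k)) M))
    · intro x hx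
      obtain ⟨d, hd, rfl⟩ := Finset.mem_image.mp hx
      exact Nat.mem_divisors.mpr ⟨mul_dvd_mul_left _ (hd2dvd d hd), hN0⟩
  · rw [Finset.sum_union hdisj, Finset.sum_image hinj]
    have hterm : ∀ d ∈ D2, Nat.totient (p ^ (k+1) * d) = p ^ k * (p - 1) * Nat.totient d := by
      intro d hd
      have hcd : Nat.Coprime (p ^ (k+1)) d :=
        Nat.Coprime.pow_left _ (hcop.coprime_dvd_right (hd2dvd d hd))
      rw [Nat.totient_mul hcd, Nat.totient_prime_pow hp (Nat.succ_pos k)]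
      simp [mul_comm]
    rw [Finset.sum_congr rfl hterm, ← Finset.mul_sum, ← h1, ← h2]

/-- Representability for `p^k * M` when `p ≤ M + 1`. -/
lemma rep_pow (p M : ℕ) (hp : p.Prime) (hcop : Nat.Coprime p M) (hM : IsPhiPractical M)
    (hple : p ≤ M + 1) : ∀ k, ∀ m, m ≤ p ^ k * M →
    ∃ D : Finset ℕ, D ⊆ (p ^ k * M).divisors ∧ m = ∑ d ∈ D, Nat.totient d := by
  have hM0 : M ≠ 0 := hM.1.ne'
  intro k
  induction k with
  | zero => simpa using phiPractical_rep hM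
  | succ k ih =>
    intro m hm
    have hq : 0 < p ^ k * (p - 1) := by
      have := hp.two_le
      exact Nat.mul_pos (pow_pos hp.pos k) (by omega)
    set q := p ^ k * (p - 1) with hqdef
    have hkey : p ^ (k+1) * M = q * M + p ^ k * M := by
      have h2 := hp.two_le
      have : p ^ (k + 1) = p ^ k * (p - 1) + p ^ k := by
        rw [pow_succ]
        have : p - 1 + 1 = p := by omega
        calc p ^ k * p = p ^ k * ((p-1) + 1) := by rw [this]
        _ = p ^ k * (p-1) + p ^ k := by ring
      rw [this]; ring
    by_cases hcase : M ≤ m / q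
    · have hqM : q * M ≤ m := by
        have h := (Nat.le_div_iff_mul_le hq).mp hcase
        rw [mul_comm] at h; exact h
      have hr : m - q * M ≤ p ^ k * M := by omega
      have heq : m = (m - q * M) + q * M := by omega
      obtain ⟨D, hD, hsum⟩ := step_rep p M k hp hcop hM0 (phiPractical_rep hM) ih M
        (m - q * M) le_rfl hr
      refine ⟨D, hD, ?_⟩
      rw [heq, hqdef]
      exact hsum
    · push_neg at hcase
      have hs : m / q ≤ M := by omega
      have hr : m % q ≤ p ^ k * M := by
        have h1 : m % q < q := Nat.mod_lt _ hq
        have h2 : q ≤ p ^ k * M := by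
          apply Nat.mul_le_mul_left
          have := hp.two_le
          omega
        omega
      obtain ⟨D, hD, hsum⟩ := step_rep p M k hp hcop hM0 (phiPractical_rep hM) ih (m / q)
        (m % q) hs hr
      refine ⟨D, hD, ?_⟩
      rw [← hsum, ← hqdef]
      exact (Nat.mod_add_div m q).symm

/-- Sufficiency for `p * M` when `p ≤ M + 2`. -/
lemma suff_pM (p M : ℕ) (hp : p.Prime) (hcop : Nat.Coprime p M) (hM : IsPhiPractical M)
    (hple : p ≤ M + 2) : IsPhiPractical (p * M) := by
  have hM0 : M ≠ 0 := hM.1.ne'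
  have h2p := hp.two_le
  have hM1 := hM.1
  refine ⟨Nat.mul_pos hp.pos hM.1, ?_⟩
  intro m hm1 hm2
  have ih0 : ∀ r, r ≤ p ^ 0 * M →
      ∃ D : Finset ℕ, D ⊆ (p ^ 0 * M).divisors ∧ r = ∑ d ∈ D, Nat.totient d := by
    simpa using phiPractical_rep hM
  have key : ∀ s r : ℕ, s ≤ M → r ≤ M → m = r + (p - 1) * s →
      ∃ D : Finset ℕ, D ⊆ (p * M).divisors ∧ m = ∑ d ∈ D, Nat.totient d := by
    intro s r hs hr hmrs
    obtain ⟨D, hD, hsum⟩ := step_rep p M 0 hp hcop hM0 (phiPractical_rep hM) ih0 s r hs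
      (by simpa using hr)
    simp only [pow_zero, zero_add, pow_one, one_mul] at hD hsum
    exact ⟨D, hD, by rw [hmrs]; exact hsum⟩
  by_cases hmM : m ≤ M
  · exact key 0 m (Nat.zero_le M) hmM (by simp)
  · push_neg at hmM
    obtain ⟨s, hdm, hrem⟩ : ∃ s, (p - 1) * s + (m - M + (p - 1) - 1) % (p - 1)
        = m - M + (p - 1) - 1 ∧ (m - M + (p - 1) - 1) % (p - 1) < p - 1 :=
      ⟨(m - M + (p - 1) - 1) / (p - 1), Nat.div_add_mod _ _, Nat.mod_lt _ (by omega)⟩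
    have hpM : p * M = (p - 1) * M + M := by
      have hp1 : (p - 1) + 1 = p := by omega
      calc p * M = ((p - 1) + 1) * M := by rw [hp1]
        _ = (p - 1) * M + M := by ring
    have hsM : s ≤ M := by
      by_contra h'
      push_neg at h'
      have h1 : (p - 1) * (M + 1) ≤ (p - 1) * s := Nat.mul_le_mul_left _ h'
      have h2 : (p - 1) * (M + 1) = (p - 1) * M + (p - 1) := by ring
      omega
    exact key s (m - (p - 1) * s) hsM (by omega) (by omega)

/-- Necessity: `IsPhiPractical (p*M)` forces `p ≤ M + 2`. -/
lemma nec_pM (p M : ℕ) (hp : p.Prime) (hcop : Nat.Coprime p M) (hM : IsPhiPractical M)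
    (h : IsPhiPractical (p * M)) : p ≤ M + 2 := by
  by_contra hlt
  push_neg at hlt
  have hM1 := hM.1
  have h2p := hp.two_le
  have hmle : M + 1 ≤ p * M := by
    have : 2 * M ≤ p * M := Nat.mul_le_mul_right M h2p
    omega
  obtain ⟨D, hD, hsum⟩ := h.2 (M + 1) (by omega) hmle
  by_cases hex : ∃ d ∈ D, p ∣ d
  · obtain ⟨d, hd, hpd⟩ := hex
    have hd0 : 0 < d := Nat.pos_of_mem_divisors (hD hd)
    have h1 : Nat.totient p ∣ Nat.totient d := Nat.totient_dvd_of_dvd hpd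
    have h2 : p - 1 ≤ Nat.totient d := by
      rw [← Nat.totient_prime hp]
      exact Nat.le_of_dvd (Nat.totient_pos.mpr hd0) h1
    have h3 : Nat.totient d ≤ M + 1 := by
      rw [hsum]
      exact Finset.single_le_sum (f := Nat.totient) (fun i _ => Nat.zero_le _) hd
    omega
  · push_neg at hex
    have hsub : D ⊆ M.divisors := by
      intro d hd
      have hmem := Nat.mem_divisors.mp (hD hd)
      have hcd : Nat.Coprime p d := (Nat.Prime.coprime_iff_not_dvd hp).mpr (hex d hd)
      have hdM : d ∣ M := (Nat.Coprime.dvd_of_dvd_mul_left hcd.symm hmem.1)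
      exact Nat.mem_divisors.mpr ⟨hdM, hM.1.ne'⟩
    have hcon : M + 1 ≤ M := by
      calc M + 1 = ∑ d ∈ D, Nat.totient d := hsum
        _ ≤ ∑ d ∈ M.divisors, Nat.totient d :=
          Finset.sum_le_sum_of_subset hsub
        _ = M := Nat.sum_totient M
    omega

/-- Necessity: for `k ≥ 2`, `IsPhiPractical (p^k * M)` forces `p ≤ M + 1`. -/
lemma nec_pkM (p M k : ℕ) (hp : p.Prime) (hcop : Nat.Coprime p M) (hM : IsPhiPractical M)
    (hk : 2 ≤ k) (h : IsPhiPractical (p ^ k * M)) : p ≤ M + 1 := by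
  by_contra hlt
  push_neg at hlt
  have hM1 := hM.1
  have h2p := hp.two_le
  have hpM1 : 1 ≤ p * M := Nat.mul_pos hp.pos hM.1
  have hle : p * M + 1 ≤ p ^ k * M := by
    have hk2 : p ^ 2 ≤ p ^ k := Nat.pow_le_pow_right hp.pos hk
    have h1 : p ^ 2 * M ≤ p ^ k * M := Nat.mul_le_mul_right M hk2
    have h3 : 2 * (p * M) ≤ p * (p * M) := Nat.mul_le_mul_right (p * M) h2p
    have h4 : p * (p * M) = p ^ 2 * M := by ring
    omega
  obtain ⟨D, hD, hsum⟩ := h.2 (p * M + 1) (by omega) hle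
  by_cases hex : ∃ d ∈ D, p ^ 2 ∣ d
  · obtain ⟨d, hd, hpd⟩ := hex
    have hd0 : 0 < d := Nat.pos_of_mem_divisors (hD hd)
    have h1 : Nat.totient (p ^ 2) ∣ Nat.totient d := Nat.totient_dvd_of_dvd hpd
    have h2 : Nat.totient (p ^ 2) = p ^ 1 * (p - 1) := Nat.totient_prime_pow hp (by norm_num)
    rw [pow_one] at h2
    have h3 : p * (p - 1) ≤ Nat.totient d := by
      rw [← h2]
      exact Nat.le_of_dvd (Nat.totient_pos.mpr hd0) h1
    have h4 : Nat.totient d ≤ p * M + 1 := by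
      rw [hsum]
      exact Finset.single_le_sum (f := Nat.totient) (fun i _ => Nat.zero_le _) hd
    have h5 : p * (M + 1) ≤ p * (p - 1) := Nat.mul_le_mul_left _ (by omega)
    have h6 : p * (M + 1) = p * M + p := by ring
    omega
  · push_neg at hex
    have hsub : D ⊆ (p * M).divisors := by
      intro d hd
      have hmem := Nat.mem_divisors.mp (hD hd)
      obtain ⟨a, b, ha, hb, hab⟩ := Nat.dvd_mul.mp hmem.1
      obtain ⟨j, hj, rfl⟩ := (Nat.dvd_prime_pow hp).mp ha
      have hj1 : j ≤ 1 := by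
        by_contra hj2
        push_neg at hj2
        have : p ^ 2 ∣ d := by
          rw [← hab]
          exact dvd_mul_of_dvd_left (pow_dvd_pow p hj2) b
        exact hex d hd this
      have hpj : p ^ j ∣ p := by
        have := pow_dvd_pow p hj1
        rwa [pow_one] at this
      have hdpM : d ∣ p * M := by
        rw [← hab]
        exact mul_dvd_mul hpj hb
      exact Nat.mem_divisors.mpr ⟨hdpM, by positivity⟩
    have hcon : p * M + 1 ≤ p * M := by
      calc p * M + 1 = ∑ d ∈ D, Nat.totient d := hsum
        _ ≤ ∑ d ∈ (p * M).divisors, Nat.totient d := Finset.sum_le_sum_of_subset hsub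
        _ = p * M := Nat.sum_totient (p * M)
    omega

theorem phiPractical_mul_prime_pow (M p : ℕ) (hM : IsPhiPractical M)
    (hp : p.Prime) (hcop : Nat.Coprime p M) :
    (IsPhiPractical (p * M) ↔ p ≤ M + 2) ∧
    (∀ k : ℕ, 2 ≤ k → (IsPhiPractical (p ^ k * M) ↔ p ≤ M + 1)) := by
  constructor
  · exact ⟨nec_pM p M hp hcop hM, fun hple => suff_pM p M hp hcop hM hple⟩
  · intro k hk
    constructor
    · exact nec_pkM p M k hp hcop hM hk
    · intro hple
      refine ⟨Nat.mul_pos (pow_pos hp.pos k) hM.1, ?_⟩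
      intro m _ hm2
      exact rep_pow p M hp hcop hM hple k m hm2
end

section
/- A squarefree positive integer n is φ-practical if and only if it is weakly φ-practical. -/
/-!
If `m` is φ-practical and `p ∤ m` is a prime with `p ≤ m + 2`, then `p * m` is φ-practical:
every `k ≤ p * m` splits as `k = t + (p - 1) * s` with `s, t ≤ m`, and representing `t` and
`s` by divisors `D` and `E` of `m` represents `k` by `D ∪ p • E`, as
`φ (p * e) = (p - 1) * φ e`.
Adding the prime factors of a squarefree weakly φ-practical number in increasing order gives
sufficiency. Conversely, let `m` be the largest divisor of `n` whose prime factors are all `< p`.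
If `p > m + 2`, a representation of `m + 1` can only use divisors of `n` that divide `m`, because
a divisor with a prime factor `q ≥ p` has totient at least `p - 1 > m + 1`; but the totients of
all divisors of `m` sum to `m`.
-/

open Finset
open scoped Nat

/-- For `p = p_{i+1}` this is `m_i`. -/
def smoothPart (n p : ℕ) : ℕ :=
  ∏ q ∈ n.primeFactors.filter (· < p), q ^ n.factorization q

theorem smoothPart_dvd (n p : ℕ) : smoothPart n p ∣ n := by
  rcases eq_or_ne n 0 with rfl | hn
  · exact dvd_zero _
  calc smoothPart n p ∣ ∏ q ∈ n.primeFactors, q ^ n.factorization q :=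
        prod_dvd_prod_of_subset _ _ _ (filter_subset _ _)
    _ = n := (Nat.prod_primeFactors_pow_factorization hn).symm

theorem not_dvd_smoothPart {n p : ℕ} (hp : p.Prime) : ¬ p ∣ smoothPart n p := by
  rw [smoothPart, hp.prime.dvd_finsetProd_iff]
  rintro ⟨q, hq, hpq⟩
  obtain ⟨hqn, hqp⟩ := mem_filter.1 hq
  have := (Nat.prime_dvd_prime_iff_eq hp (Nat.prime_of_mem_primeFactors hqn)).1
    (hp.dvd_of_dvd_pow hpq)
  omega

theorem dvd_smoothPart {d n p : ℕ} (hd : d ∣ n) (hn : n ≠ 0)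
    (hdp : ∀ q ∈ d.primeFactors, q < p) : d ∣ smoothPart n p := by
  have hd0 : d ≠ 0 := ne_zero_of_dvd_ne_zero hn hd
  calc d = ∏ q ∈ d.primeFactors, q ^ d.factorization q :=
        Nat.prod_primeFactors_pow_factorization hd0
    _ ∣ ∏ q ∈ d.primeFactors, q ^ n.factorization q :=
        prod_dvd_prod_of_dvd _ _ fun q _ =>
          pow_dvd_pow q ((Nat.factorization_le_iff_dvd hd0 hn).2 hd q)
    _ ∣ smoothPart n p :=
        prod_dvd_prod_of_subset _ _ _ fun q hq =>
          mem_filter.2 ⟨Nat.primeFactors_mono hd hn hq, hdp q hq⟩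

theorem Nat.sub_one_le_totient_of_prime_dvd {p d : ℕ} (hp : p.Prime) (hpd : p ∣ d)
    (hd : d ≠ 0) : p - 1 ≤ φ d :=
  Nat.totient_prime hp ▸
    Nat.le_of_dvd (Nat.totient_pos.2 (Nat.pos_of_ne_zero hd)) (Nat.totient_dvd_of_dvd hpd)

theorem Nat.exists_eq_add_mul_of_le_mul_succ {P m k : ℕ} (hP : P ≤ m + 1)
    (hk : k ≤ m * (P + 1)) : ∃ s ≤ m, ∃ t ≤ m, k = t + P * s := by
  rw [mul_add_one] at hk
  by_cases hmk : m * P ≤ k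
  · exact ⟨m, le_rfl, k - m * P, by omega, by rw [mul_comm P]; omega⟩
  · have hP0 : 0 < P := Nat.pos_of_ne_zero fun h => by simp [h] at hmk
    refine ⟨k / P, ((Nat.div_lt_iff_lt_mul hP0).2 (by omega)).le, k % P, ?_,
      (Nat.mod_add_div k P).symm⟩
    have := Nat.mod_lt k hP0
    omega

namespace IsPhiPractical

theorem one : IsPhiPractical 1 :=
  ⟨one_pos, fun m _ hm1 => ⟨{1}, by simp, by simp; omega⟩⟩

theorem exists_sum_totient_eq {n k : ℕ} (h : IsPhiPractical n) (hk : k ≤ n) :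
    ∃ D ⊆ n.divisors, k = ∑ d ∈ D, φ d := by
  rcases Nat.eq_zero_or_pos k with rfl | hk0
  · exact ⟨∅, empty_subset _, rfl⟩
  · exact h.2 k hk0 hk

theorem prime_mul {m p : ℕ} (hm : IsPhiPractical m) (hp : p.Prime) (hpm : ¬ p ∣ m)
    (hpm2 : p ≤ m + 2) : IsPhiPractical (p * m) := by
  have hpm0 : p * m ≠ 0 := (Nat.mul_pos hp.pos hm.1).ne'
  refine ⟨Nat.pos_of_ne_zero hpm0, fun k _ hk => ?_⟩
  have hk' : k ≤ m * (p - 1 + 1) := by rwa [Nat.sub_add_cancel hp.one_le, mul_comm]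
  obtain ⟨s, hs, t, ht, rfl⟩ :=
    Nat.exists_eq_add_mul_of_le_mul_succ (show p - 1 ≤ m + 1 by omega) hk'
  obtain ⟨D, hD, rfl⟩ := hm.exists_sum_totient_eq ht
  obtain ⟨E, hE, rfl⟩ := hm.exists_sum_totient_eq hs
  have hcop : ∀ d ∈ m.divisors, ¬ p ∣ d := fun d hd hpd =>
    hpm (hpd.trans (Nat.dvd_of_mem_divisors hd))
  have hdisj : Disjoint D (E.image (p * ·)) := by
    refine disjoint_left.2 fun x hxD hxE => ?_
    obtain ⟨e, -, rfl⟩ := mem_image.1 hxE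
    exact hcop _ (hD hxD) (dvd_mul_right p e)
  refine ⟨D ∪ E.image (p * ·), union_subset ?_ ?_, ?_⟩
  · exact hD.trans (Nat.divisors_subset_of_dvd hpm0 (dvd_mul_left m p))
  · refine image_subset_iff.2 fun e he => Nat.mem_divisors.2 ⟨?_, hpm0⟩
    exact mul_dvd_mul_left p (Nat.dvd_of_mem_divisors (hE he))
  · rw [sum_union hdisj, sum_image fun a _ b _ h => Nat.eq_of_mul_eq_mul_left hp.pos h,
      mul_sum]
    exact congrArg _ (sum_congr rfl fun e he =>
      (Nat.totient_mul_of_prime_of_not_dvd hp (hcop e (hE he))).symm)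

theorem prod_primes {S : Finset ℕ} (hS : ∀ p ∈ S, p.Prime)
    (hgap : ∀ p ∈ S, p ≤ ∏ q ∈ S.filter (· < p), q + 2) :
    IsPhiPractical (∏ p ∈ S, p) := by
  induction S using Finset.induction_on_max with
  | empty => simpa using one
  | insert p T hTp ih =>
    have hpT : p ∉ T := fun h => lt_irrefl p (hTp p h)
    have hp := hS p (mem_insert_self p T)
    rw [prod_insert hpT]
    refine (ih (fun q hq => hS q (mem_insert_of_mem hq)) fun r hr => ?_).prime_mul hp ?_ ?_
    · simpa [filter_insert, (hTp r hr).not_gt] using hgap r (mem_insert_of_mem hr)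
    · rw [hp.prime.dvd_finsetProd_iff]
      rintro ⟨q, hq, hpq⟩
      have hpq := (Nat.prime_dvd_prime_iff_eq hp (hS q (mem_insert_of_mem hq))).1 hpq
      exact (hTp q hq).ne' hpq
    · simpa [filter_insert, filter_true_of_mem hTp] using hgap p (mem_insert_self p T)

theorem isWeaklyPhiPractical {n : ℕ} (h : IsPhiPractical n) : IsWeaklyPhiPractical n := by
  refine ⟨h.1, fun p hp hpn => ?_⟩
  change p ≤ smoothPart n p + 2
  by_contra! hlt
  set m := smoothPart n p
  have hmn : m < n := lt_of_le_of_ne (Nat.le_of_dvd h.1 (smoothPart_dvd n p))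
    fun heq => not_dvd_smoothPart hp (heq ▸ hpn)
  have hm0 : m ≠ 0 := ne_zero_of_dvd_ne_zero h.1.ne' (smoothPart_dvd n p)
  obtain ⟨D, hD, hsum⟩ := h.2 (m + 1) le_add_self hmn
  have hDm : D ⊆ m.divisors := fun d hd => by
    have hd0 : d ≠ 0 := Nat.ne_of_gt (Nat.pos_of_mem_divisors (hD hd))
    have hφ : φ d ≤ m + 1 := hsum ▸ single_le_sum (fun _ _ => Nat.zero_le _) hd
    refine Nat.mem_divisors.2 ⟨dvd_smoothPart (Nat.dvd_of_mem_divisors (hD hd)) h.1.ne'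
      fun q hq => ?_, hm0⟩
    by_contra! hpq
    have := Nat.sub_one_le_totient_of_prime_dvd (Nat.prime_of_mem_primeFactors hq)
      (Nat.dvd_of_mem_primeFactors hq) hd0
    omega
  have := sum_le_sum_of_subset (f := φ) hDm
  rw [Nat.sum_totient, ← hsum] at this
  omega

end IsPhiPractical

theorem IsWeaklyPhiPractical.isPhiPractical_of_squarefree {n : ℕ} (h : IsWeaklyPhiPractical n)
    (hsf : Squarefree n) : IsPhiPractical n := by
  rw [← Nat.prod_primeFactors_of_squarefree hsf]
  refine IsPhiPractical.prod_primes (fun p hp => Nat.prime_of_mem_primeFactors hp)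
    fun p hp => ?_
  have hexp : ∀ q ∈ n.primeFactors.filter (· < p), q ^ n.factorization q = q := fun q hq => by
    have hq := (mem_filter.1 hq).1
    rw [Nat.factorization_eq_one_of_squarefree hsf (Nat.prime_of_mem_primeFactors hq)
      (Nat.dvd_of_mem_primeFactors hq), pow_one]
  simpa only [prod_congr rfl hexp] using
    h.2 p (Nat.prime_of_mem_primeFactors hp) (Nat.dvd_of_mem_primeFactors hp)

theorem squarefree_phiPractical_iff_weakly_general (n : ℕ)
    (hsf : Squarefree n) :
    IsPhiPractical n ↔ IsWeaklyPhiPractical n :=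
  ⟨IsPhiPractical.isWeaklyPhiPractical, fun h => h.isPhiPractical_of_squarefree hsf⟩

theorem squarefree_phiPractical_iff_weakly (n : ℕ) (hn : 0 < n)
    (hsf : Squarefree n) :
    IsPhiPractical n ↔ IsWeaklyPhiPractical n :=
  squarefree_phiPractical_iff_weakly_general n hsf
end

section
/- Every strictly 2-dense number is φ-practical. -/
/-- The divisors of `n` listed in increasing order. -/
def sortedDivisors (n : ℕ) : List ℕ := n.divisors.sort (· ≤ ·)

/-- A squarefree positive integer `n` with increasing divisor list
`1 = d₁ < d₂ < ⋯ < d_τ = n` is strictly 2-dense if `d_{i+1}/d_i < 2` for all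
`i` with `1 < i < τ - 1`, while `d₂/d₁ = 2 = d_τ/d_{τ-1}`. -/
def IsStrictlyTwoDense (n : ℕ) : Prop :=
  Squarefree n ∧ 0 < n ∧
  (sortedDivisors n).getD 1 0 = 2 * (sortedDivisors n).getD 0 0 ∧
  (sortedDivisors n).getD ((sortedDivisors n).length - 1) 0 =
    2 * (sortedDivisors n).getD ((sortedDivisors n).length - 2) 0 ∧
  ∀ i : ℕ, 2 ≤ i → i + 2 ≤ (sortedDivisors n).length →
    (sortedDivisors n).getD i 0 < 2 * (sortedDivisors n).getD (i - 1) 0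

/-!
Let `p₁ < ⋯ < p_k` be the prime factors of a squarefree `n`. If `p_j ≤ 2 + p₁ ⋯ p_{j-1}` for
every `j`, then `n` is φ-practical, by induction on `k`: if `m` is φ-practical, `p ∤ m` and
`p ≤ m + 2`, then every `x ≤ m p` is `c (p - 1) + a` with `a, c ≤ m`, and `φ (d p) = φ d (p - 1)`
for `d ∣ m`.

A strictly 2-dense `n` satisfies this bound. Let `P` be the product of the prime factors of `n`
below `q` and `H = n / P`, whose prime factors are all `≥ q`. If `q > P + 2`, then `2 ∣ P`, and
no divisor of `n` lies strictly between `2` and `q` (if `P = 2`), resp. between `H` and `2 H`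
(if `P ≥ 4`); the density condition fails for this pair of consecutive divisors.
-/

open Finset Nat

theorem isPhiPractical_iff {n : ℕ} :
    IsPhiPractical n ↔ 0 < n ∧ ∀ m ≤ n, ∃ D ⊆ n.divisors, m = ∑ d ∈ D, φ d := by
  refine ⟨fun ⟨hn, hrep⟩ ↦ ⟨hn, fun m hm ↦ ?_⟩, fun ⟨hn, hrep⟩ ↦ ⟨hn, fun m _ hm ↦ hrep m hm⟩⟩
  rcases Nat.eq_zero_or_pos m with rfl | hm0
  · exact ⟨∅, empty_subset _, rfl⟩
  · exact hrep m hm0 hm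

theorem isPhiPractical_one : IsPhiPractical 1 :=
  isPhiPractical_iff.mpr ⟨one_pos, fun m hm ↦ by
    interval_cases m
    exacts [⟨∅, empty_subset _, rfl⟩, ⟨{1}, by simp, by simp⟩]⟩

theorem exists_eq_mul_add_of_le {m k x : ℕ} (hk : k ≤ m + 1) (hx : x ≤ m * k + m) :
    ∃ c ≤ m, ∃ a ≤ m, x = c * k + a := by
  rcases le_or_gt (m * k) x with hmx | hxm
  · exact ⟨m, le_rfl, x - m * k, by omega, by omega⟩
  · have hk0 : 0 < k := Nat.pos_of_ne_zero (by rintro rfl; simp at hxm)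
    refine ⟨x / k, ?_, x % k, by have := Nat.mod_lt x hk0; omega, (Nat.div_add_mod' x k).symm⟩
    exact (Nat.div_lt_of_lt_mul (by linarith)).le

theorem sum_totient_union_image_mul_prime {m p : ℕ} (hp : p.Prime) (hpm : ¬ p ∣ m)
    {D₁ D₂ : Finset ℕ} (h₁ : D₁ ⊆ m.divisors) (h₂ : D₂ ⊆ m.divisors) :
    ∑ d ∈ D₁ ∪ D₂.image (· * p), φ d = ∑ d ∈ D₁, φ d + (∑ d ∈ D₂, φ d) * (p - 1) := by
  have hdisj : Disjoint D₁ (D₂.image (· * p)) := by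
    refine disjoint_left.mpr fun d hd₁ hd₂ ↦ ?_
    obtain ⟨e, -, rfl⟩ := mem_image.mp hd₂
    exact hpm ((dvd_mul_left p e).trans (dvd_of_mem_divisors (h₁ hd₁)))
  rw [sum_union hdisj, sum_image fun _ _ _ _ ↦ Nat.eq_of_mul_eq_mul_right hp.pos, sum_mul]
  congr 1
  refine sum_congr rfl fun d hd ↦ ?_
  have hpd : ¬ p ∣ d := fun hpd ↦ hpm (hpd.trans (dvd_of_mem_divisors (h₂ hd)))
  rw [totient_mul ((hp.coprime_iff_not_dvd.mpr hpd).symm), totient_prime hp]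

theorem union_image_mul_subset_divisors {m p : ℕ} (hp : p ≠ 0)
    {D₁ D₂ : Finset ℕ} (h₁ : D₁ ⊆ m.divisors) (h₂ : D₂ ⊆ m.divisors) :
    D₁ ∪ D₂.image (· * p) ⊆ (m * p).divisors := by
  intro d hd
  rcases mem_union.mp hd with hd | hd
  · obtain ⟨hdm, hm⟩ := mem_divisors.mp (h₁ hd)
    exact mem_divisors.mpr ⟨hdm.mul_right p, mul_ne_zero hm hp⟩
  · obtain ⟨e, he, rfl⟩ := mem_image.mp hd
    obtain ⟨hem, hm⟩ := mem_divisors.mp (h₂ he)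
    exact mem_divisors.mpr ⟨mul_dvd_mul_right hem p, mul_ne_zero hm hp⟩

theorem IsPhiPractical.mul_prime {m p : ℕ} (hm : IsPhiPractical m) (hp : p.Prime)
    (hpm : ¬ p ∣ m) (hle : p ≤ m + 2) : IsPhiPractical (m * p) := by
  obtain ⟨hm0, hrep⟩ := isPhiPractical_iff.mp hm
  refine isPhiPractical_iff.mpr ⟨Nat.mul_pos hm0 hp.pos, fun x hx ↦ ?_⟩
  have hmp : m * p = m * (p - 1) + m := by
    rw [Nat.mul_sub_one, Nat.sub_add_cancel (Nat.le_mul_of_pos_right m hp.pos)]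
  obtain ⟨c, hc, a, ha, rfl⟩ := exists_eq_mul_add_of_le (k := p - 1) (by omega) (hmp ▸ hx)
  obtain ⟨D₁, h₁, rfl⟩ := hrep a ha
  obtain ⟨D₂, h₂, rfl⟩ := hrep _ hc
  exact ⟨_, union_image_mul_subset_divisors hp.ne_zero h₁ h₂,
    by rw [sum_totient_union_image_mul_prime hp hpm h₁ h₂, add_comm]⟩

theorem isPhiPractical_prod_of_le_two_add_prod (s : Finset ℕ) (hs : ∀ p ∈ s, p.Prime)
    (hle : ∀ q ∈ s, q ≤ 2 + ∏ p ∈ s with p < q, p) : IsPhiPractical (∏ p ∈ s, p) := by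
  induction s using Finset.induction_on_max with
  | empty => simpa using isPhiPractical_one
  | insert q s hlt ih =>
    have hqs : q ∉ s := fun h ↦ (hlt q h).false
    have hq := hs q (mem_insert_self q s)
    have hfilter : ∀ r, r ≤ q → ({p ∈ insert q s | p < r} : Finset ℕ) = {p ∈ s | p < r} := by
      intro r hr
      rw [filter_insert, if_neg (by omega)]
    have hpm : ¬ q ∣ ∏ p ∈ s, p := by
      rw [hq.prime.dvd_finsetProd_iff]
      rintro ⟨p, hp, hqp⟩
      exact (hlt p hp).not_ge (Nat.le_of_dvd (hs p (mem_insert_of_mem hp)).pos hqp)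
    have hs' : ∀ p ∈ s, p.Prime := fun p hp ↦ hs p (mem_insert_of_mem hp)
    have hle' : ∀ r ∈ s, r ≤ 2 + ∏ p ∈ s with p < r, p := fun r hr ↦
      hfilter r (hlt r hr).le ▸ hle r (mem_insert_of_mem hr)
    have hqle : q ≤ (∏ p ∈ s, p) + 2 := by
      have := hle q (mem_insert_self q s)
      rwa [hfilter q le_rfl, filter_true_of_mem hlt, add_comm] at this
    rw [prod_insert hqs, mul_comm]
    exact (ih hs' hle').mul_prime hq hpm hqle

theorem mem_sortedDivisors {n d : ℕ} (hn : n ≠ 0) : d ∈ sortedDivisors n ↔ d ∣ n := by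
  simp [sortedDivisors, hn]

theorem sortedDivisors_sortedLT (n : ℕ) : (sortedDivisors n).SortedLT :=
  Finset.sortedLT_sort _

theorem IsStrictlyTwoDense.ne_zero {n : ℕ} (h : IsStrictlyTwoDense n) : n ≠ 0 :=
  h.2.1.ne'

theorem IsStrictlyTwoDense.two_dvd {n : ℕ} (h : IsStrictlyTwoDense n) : 2 ∣ n := by
  obtain ⟨-, hn, hfirst, -⟩ := h
  set L := sortedDivisors n
  have hmem : ∀ {d}, d ∈ L ↔ d ∣ n := mem_sortedDivisors hn.ne'
  obtain ⟨k, hk, hk1⟩ := List.mem_iff_getElem.mp (hmem.mpr (one_dvd n))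
  have h0 : L[0] = 1 := le_antisymm
    (hk1 ▸ (sortedDivisors_sortedLT n).getElem_le_getElem_iff.mpr (Nat.zero_le k))
    (Nat.pos_of_dvd_of_pos (hmem.mp (List.getElem_mem _)) hn)
  rw [List.getD_eq_getElem (n := 0) _ _ (by omega), h0] at hfirst
  have h1 : 1 < L.length := by
    by_contra hlen
    rw [List.getD_eq_default _ _ (by omega)] at hfirst
    omega
  rw [List.getD_eq_getElem _ _ h1, mul_one] at hfirst
  exact hfirst ▸ hmem.mp (List.getElem_mem h1)

theorem IsStrictlyTwoDense.lt_two_mul_of_consecutive {n a b : ℕ} (h : IsStrictlyTwoDense n)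
    (ha : a ∣ n) (hb : b ∣ n) (ha2 : 2 ≤ a) (hab : a < b) (hbn : b < n)
    (hgap : ∀ f, f ∣ n → f ≤ a ∨ b ≤ f) : b < 2 * a := by
  obtain ⟨-, hn, -, -, hdense⟩ := h
  set L := sortedDivisors n
  have hL := sortedDivisors_sortedLT n
  have hmem : ∀ {d}, d ∈ L ↔ d ∣ n := mem_sortedDivisors hn.ne'
  obtain ⟨i, hi, rfl⟩ := List.mem_iff_getElem.mp (hmem.mpr hb)
  obtain ⟨j, hj, rfl⟩ := List.mem_iff_getElem.mp (hmem.mpr ha)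
  obtain ⟨k, hk, hk1⟩ := List.mem_iff_getElem.mp (hmem.mpr (one_dvd n))
  obtain ⟨t, ht, htn⟩ := List.mem_iff_getElem.mp (hmem.mpr dvd_rfl)
  have hji : j < i := hL.getElem_lt_getElem_iff.mp hab
  have hit : i < t := hL.getElem_lt_getElem_iff.mp (htn ▸ hbn)
  have hpred : L[i - 1] = L[j] := by
    rcases hgap L[i - 1] (hmem.mp (List.getElem_mem _)) with hle | hge
    · exact le_antisymm hle (hL.getElem_le_getElem_iff.mpr (by omega))
    · exact absurd hge (not_le.mpr (hL.getElem_lt_getElem_iff.mpr (by omega)))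
  have hki : k < i - 1 := hL.getElem_lt_getElem_iff.mp (by rw [hk1, hpred]; omega)
  have := hdense i (by omega) (by omega)
  rwa [List.getD_eq_getElem _ _ hi, List.getD_eq_getElem _ _ (by omega), hpred] at this

theorem le_of_dvd_of_forall_prime_dvd_le {q h H : ℕ} (hH : 0 < H)
    (hprime : ∀ r, r.Prime → r ∣ H → q ≤ r) (hh : h ∣ H) (hh1 : h ≠ 1) : q ≤ h :=
  (hprime _ (minFac_prime hh1) ((minFac_dvd h).trans hh)).trans
    (minFac_le (Nat.pos_of_dvd_of_pos hh hH))

theorem mul_le_of_dvd_of_forall_prime_dvd_le {q h H : ℕ} (hH : 0 < H)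
    (hprime : ∀ r, r.Prime → r ∣ H → q ≤ r) (hh : h ∣ H) (hne : h ≠ H) : q * h ≤ H := by
  obtain ⟨c, rfl⟩ := hh
  have hc1 : c ≠ 1 := by rintro rfl; simp at hne
  calc q * h ≤ c * h :=
        Nat.mul_le_mul_right h (le_of_dvd_of_forall_prime_dvd_le hH hprime (dvd_mul_left c h) hc1)
    _ = h * c := mul_comm c h

theorem le_or_le_of_dvd_mul_of_forall_prime_dvd_le {f q P H : ℕ} (hP : 0 < P) (hH : 0 < H)
    (hprime : ∀ r, r.Prime → r ∣ H → q ≤ r) (hf : f ∣ P * H) : f ≤ P ∨ q ≤ f := by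
  obtain ⟨d, h, hd, hh, rfl⟩ := exists_dvd_and_dvd_of_dvd_mul hf
  by_cases hh1 : h = 1
  · exact .inl (by simpa [hh1] using Nat.le_of_dvd hP hd)
  · exact .inr ((le_of_dvd_of_forall_prime_dvd_le hH hprime hh hh1).trans
      (Nat.le_mul_of_pos_left h (Nat.pos_of_dvd_of_pos hd hP)))

theorem le_or_two_mul_le_of_dvd_mul_of_forall_prime_dvd_le {f q P H : ℕ} (hP : 0 < P) (hH : 0 < H)
    (hPq : P < q) (hprime : ∀ r, r.Prime → r ∣ H → q ≤ r) (hf : f ∣ P * H) :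
    f ≤ H ∨ 2 * H ≤ f := by
  obtain ⟨d, h, hd, hh, rfl⟩ := exists_dvd_and_dvd_of_dvd_mul hf
  by_cases hhH : h = H
  · subst hhH
    have hd0 : 0 < d := Nat.pos_of_dvd_of_pos hd hP
    rcases Nat.lt_or_ge d 2 with hd2 | hd2
    · exact .inl (by interval_cases d; simp)
    · exact .inr (Nat.mul_le_mul_right h hd2)
  · refine .inl (le_of_lt ?_)
    calc d * h ≤ P * h := Nat.mul_le_mul_right h (Nat.le_of_dvd hP hd)
      _ < q * h := Nat.mul_lt_mul_of_pos_right hPq (Nat.pos_of_dvd_of_pos hh hH)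
      _ ≤ H := mul_le_of_dvd_of_forall_prime_dvd_le hH hprime hh hhH

theorem IsStrictlyTwoDense.lt_four_of_eq_two_mul {n q H : ℕ} (h : IsStrictlyTwoDense n)
    (hn : n = 2 * H) (hprime : ∀ r, r.Prime → r ∣ H → q ≤ r) (hqH : q ∣ H) : q < 4 := by
  have hH : 0 < H := Nat.pos_of_ne_zero (right_ne_zero_of_mul (hn ▸ h.ne_zero))
  by_contra! hq4
  have hqn : q < n := by have := Nat.le_of_dvd hH hqH; omega
  have hgap : ∀ f, f ∣ n → f ≤ 2 ∨ q ≤ f := fun f hf ↦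
    le_or_le_of_dvd_mul_of_forall_prime_dvd_le two_pos hH hprime (hn ▸ hf)
  have := h.lt_two_mul_of_consecutive h.two_dvd (hn ▸ hqH.mul_left 2) le_rfl (by omega) hqn hgap
  omega

theorem IsStrictlyTwoDense.le_of_eq_mul_of_four_le {n q P H : ℕ} (h : IsStrictlyTwoDense n)
    (hn : n = P * H) (h2P : 2 ∣ P) (hP4 : 4 ≤ P) (hprime : ∀ r, r.Prime → r ∣ H → q ≤ r)
    (hqH : q ∣ H) (hq : 2 ≤ q) : q ≤ P := by
  have hH : 0 < H := Nat.pos_of_ne_zero (right_ne_zero_of_mul (hn ▸ h.ne_zero))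
  by_contra! hPq
  have hH2 : 2 ≤ H := hq.trans (Nat.le_of_dvd hH hqH)
  have hgap : ∀ f, f ∣ n → f ≤ H ∨ 2 * H ≤ f := fun f hf ↦
    le_or_two_mul_le_of_dvd_mul_of_forall_prime_dvd_le (by omega) hH hPq hprime (hn ▸ hf)
  have h2Hn : 2 * H < n := hn ▸ Nat.mul_lt_mul_of_pos_right (by omega) hH
  have := h.lt_two_mul_of_consecutive (hn ▸ dvd_mul_left H P)
    (hn ▸ mul_dvd_mul_right h2P H) hH2 (by omega) h2Hn hgap
  omega

theorem IsStrictlyTwoDense.le_two_add_prod {n q : ℕ} (h : IsStrictlyTwoDense n)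
    (hq : q ∈ n.primeFactors) : q ≤ 2 + ∏ p ∈ n.primeFactors with p < q, p := by
  set P := ∏ p ∈ n.primeFactors with p < q, p
  set H := ∏ p ∈ n.primeFactors with ¬ p < q, p
  have hn : n = P * H := by
    rw [prod_filter_mul_prod_filter_not, prod_primeFactors_of_squarefree h.1]
  have hH : H ≠ 0 := right_ne_zero_of_mul (hn ▸ h.ne_zero)
  have hprime : ∀ r, r.Prime → r ∣ H → q ≤ r := fun r hr hrH ↦ by
    have := mem_primeFactors.mpr ⟨hr, hrH, hH⟩
    rw [primeFactors_prod fun p hp ↦ prime_of_mem_primeFactors (mem_filter.mp hp).1] at this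
    exact not_lt.mp (mem_filter.mp this).2
  have hqH : q ∣ H := dvd_prod_of_mem _ (mem_filter.mpr ⟨hq, lt_irrefl q⟩)
  rcases le_or_gt q 2 with hq2 | hq2
  · omega
  have h2P : 2 ∣ P := dvd_prod_of_mem _
    (mem_filter.mpr ⟨mem_primeFactors.mpr ⟨prime_two, h.two_dvd, h.ne_zero⟩, hq2⟩)
  have hP : P ≠ 0 := left_ne_zero_of_mul (hn ▸ h.ne_zero)
  obtain hP2 | hP4 : P = 2 ∨ 4 ≤ P := by obtain ⟨c, hc⟩ := h2P; omega
  · have := h.lt_four_of_eq_two_mul (hP2 ▸ hn) hprime hqH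
    omega
  · have := h.le_of_eq_mul_of_four_le hn h2P hP4 hprime hqH hq2.le
    omega

theorem strictlyTwoDense_is_phiPractical (n : ℕ) (h : IsStrictlyTwoDense n) :
    IsPhiPractical n := by
  have := isPhiPractical_prod_of_le_two_add_prod n.primeFactors
    (fun p hp ↦ prime_of_mem_primeFactors hp) fun q hq ↦ h.le_two_add_prod hq
  rwa [prod_primeFactors_of_squarefree h.1] at this
end

section
/- For every integer n > 1, T(n) ≤ 2 if and only if T(n/P(n)) ≤ 2 and P(n) ≤ √(2n). -/
/-- `maxDivisorRatio n` (called `T(n)` in the paper) is the maximum ratio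
`d_{i+1}/d_i` over consecutive divisors `1 = d₁ < d₂ < ⋯ < d_{τ(n)} = n` of
`n`, with `T(1) = 1`. -/
noncomputable def maxDivisorRatio (n : ℕ) : ℝ :=
  sSup ({(1 : ℝ)} ∪ {r : ℝ | ∃ d e : ℕ, d ∣ n ∧ e ∣ n ∧ d < e ∧
    (∀ c : ℕ, c ∣ n → c ≤ d ∨ e ≤ c) ∧ r = (e : ℝ) / (d : ℝ)})

/-- `largestPrimeFactor n` is the largest prime factor of `n`, with
`largestPrimeFactor 1 = 1`. -/
def largestPrimeFactor (n : ℕ) : ℕ :=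
  if n ≤ 1 then 1 else n.primeFactors.sup id

lemma lpf_one_of_le {n : ℕ} (h : n ≤ 1) : largestPrimeFactor n = 1 := if_pos h

lemma lpf_mem {n : ℕ} (hn : 1 < n) : largestPrimeFactor n ∈ n.primeFactors := by
  rw [largestPrimeFactor, if_neg (by omega)]
  obtain ⟨b, hb, he⟩ := Finset.exists_mem_eq_sup n.primeFactors
    (Nat.nonempty_primeFactors.mpr hn) id
  rw [he]; exact hb

lemma lpf_prime {n : ℕ} (hn : 1 < n) : (largestPrimeFactor n).Prime :=
  Nat.prime_of_mem_primeFactors (lpf_mem hn)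

lemma lpf_dvd {n : ℕ} (hn : 1 < n) : largestPrimeFactor n ∣ n :=
  Nat.dvd_of_mem_primeFactors (lpf_mem hn)

lemma lpf_pos (n : ℕ) : 0 < largestPrimeFactor n := by
  by_cases h : n ≤ 1
  · rw [lpf_one_of_le h]; omega
  · exact (lpf_prime (by omega)).pos

lemma le_lpf {n p : ℕ} (hp : p ∈ n.primeFactors) : p ≤ largestPrimeFactor n := by
  have h1 : 1 < n := Nat.nonempty_primeFactors.mp ⟨p, hp⟩
  rw [largestPrimeFactor, if_neg (by omega)]
  exact Finset.le_sup (f := id) hp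

lemma lpf_mono {a b : ℕ} (h : a ∣ b) (hb : 0 < b) :
    largestPrimeFactor a ≤ largestPrimeFactor b := by
  by_cases ha : a ≤ 1
  · rw [lpf_one_of_le ha]; exact lpf_pos b
  · push_neg at ha
    exact le_lpf (Nat.mem_primeFactors.mpr
      ⟨lpf_prime ha, (lpf_dvd ha).trans h, hb.ne'⟩)

/-- The `2`-dense ("gap") property: every divisor `d < n` has another divisor
in `(d, 2d]`. -/
def Gap2 (n : ℕ) : Prop := ∀ d, d ∣ n → d < n → ∃ f, f ∣ n ∧ d < f ∧ f ≤ 2 * d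

lemma gap2_one : Gap2 1 := by
  intro d hd hlt
  rw [Nat.dvd_one] at hd
  omega

lemma mdr_le_two_iff {n : ℕ} (hn : 0 < n) : maxDivisorRatio n ≤ 2 ↔ Gap2 n := by
  have hbdd : BddAbove ({(1 : ℝ)} ∪ {r : ℝ | ∃ d e : ℕ, d ∣ n ∧ e ∣ n ∧ d < e ∧
      (∀ c : ℕ, c ∣ n → c ≤ d ∨ e ≤ c) ∧ r = (e : ℝ) / (d : ℝ)}) := by
    refine ⟨(n : ℝ), ?_⟩
    rintro r (rfl | ⟨d, e, hd, he, hde, _, rfl⟩)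
    · exact_mod_cast hn
    · have hd1 : 1 ≤ d := Nat.pos_of_dvd_of_pos hd hn
      have hen : e ≤ n := Nat.le_of_dvd hn he
      calc (e : ℝ) / d ≤ (e : ℝ) := by
            apply div_le_self (by positivity) (by exact_mod_cast hd1)
        _ ≤ (n : ℝ) := by exact_mod_cast hen
  have hne : ({(1 : ℝ)} ∪ {r : ℝ | ∃ d e : ℕ, d ∣ n ∧ e ∣ n ∧ d < e ∧
      (∀ c : ℕ, c ∣ n → c ≤ d ∨ e ≤ c) ∧ r = (e : ℝ) / (d : ℝ)}).Nonempty :=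
    ⟨1, Or.inl rfl⟩
  rw [maxDivisorRatio, csSup_le_iff hbdd hne]
  constructor
  · intro h d hd hlt
    have hsne : (n.divisors.filter (fun f => d < f)).Nonempty :=
      ⟨n, by simp [Nat.mem_divisors, hn.ne', hlt]⟩
    set e := (n.divisors.filter (fun f => d < f)).min' hsne with he
    have hemem := Finset.min'_mem _ hsne
    rw [Finset.mem_filter, Nat.mem_divisors] at hemem
    obtain ⟨⟨hednd, _⟩, hdlt⟩ := hemem
    have hbetween : ∀ c : ℕ, c ∣ n → c ≤ d ∨ e ≤ c := by
      intro c hc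
      by_cases h1 : c ≤ d
      · exact Or.inl h1
      · refine Or.inr (Finset.min'_le _ _ ?_)
        rw [Finset.mem_filter, Nat.mem_divisors]
        exact ⟨⟨hc, hn.ne'⟩, by omega⟩
    have h2 := h ((e : ℝ) / (d : ℝ))
      (Or.inr ⟨d, e, hd, hednd, hdlt, hbetween, rfl⟩)
    have hd1 : 0 < d := Nat.pos_of_dvd_of_pos hd hn
    rw [div_le_iff₀ (by exact_mod_cast hd1)] at h2
    refine ⟨e, hednd, hdlt, ?_⟩
    have : (e : ℝ) ≤ 2 * d := by linarith
    exact_mod_cast this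
  · rintro hg r (rfl | ⟨d, e, hd, he, hde, hb, rfl⟩)
    · norm_num
    · have hd1 : 0 < d := Nat.pos_of_dvd_of_pos hd hn
      have hdn : d < n := lt_of_lt_of_le hde (Nat.le_of_dvd hn he)
      obtain ⟨f, hf, hdf, hf2⟩ := hg d hd hdn
      have hef : e ≤ f := (hb f hf).resolve_left (by omega)
      have h3 : e ≤ 2 * d := le_trans hef hf2
      rw [div_le_iff₀ (by exact_mod_cast hd1)]
      have : (e : ℝ) ≤ 2 * d := by exact_mod_cast h3
      linarith

/-- One step of removing the largest prime factor. -/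
def redTop (x : ℕ) : ℕ := x / largestPrimeFactor x

lemma redTop_one : redTop 1 = 1 := by
  rw [redTop, lpf_one_of_le le_rfl]

/-- The core step: if `n` has the gap property, `n = m * a` where every prime
factor of `a` is at least `largestPrimeFactor m`, then the chain inequality
holds at `m`. -/
lemma chainstep {n m a : ℕ} (hn : 0 < n) (hg : Gap2 n) (hna : n = m * a) (hm : 1 < m)
    (ha : ∀ p, p.Prime → p ∣ a → largestPrimeFactor m ≤ p) :
    largestPrimeFactor m ≤ 2 * (m / largestPrimeFactor m) := by
  set q := largestPrimeFactor m with hq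
  have hqp : q.Prime := lpf_prime hm
  have hqdvd : q ∣ m := lpf_dvd hm
  have hq2 : 2 ≤ q := hqp.two_le
  have hsne : (n.divisors.filter (fun c => c < q)).Nonempty :=
    ⟨1, by simp [Nat.mem_divisors, hn.ne']; omega⟩
  set d := Finset.max' _ hsne with hd
  have hdmem := Finset.max'_mem _ hsne
  rw [Finset.mem_filter, Nat.mem_divisors] at hdmem
  obtain ⟨⟨hddvd, _⟩, hdq⟩ := hdmem
  have hdpos : 0 < d := Nat.pos_of_dvd_of_pos hddvd hn
  have hmn : m ≤ n := Nat.le_of_dvd hn ⟨a, hna⟩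
  have hqm : q ≤ m := Nat.le_of_dvd (by omega) hqdvd
  have hdn : d < n := by omega
  obtain ⟨f, hfdvd, hdf, hf2⟩ := hg d hddvd hdn
  have hqf : q ≤ f := by
    by_contra hlt
    have hfle : f ≤ d := by
      apply Finset.le_max' _ f
      rw [Finset.mem_filter, Nat.mem_divisors]
      exact ⟨⟨hfdvd, hn.ne'⟩, by omega⟩
    omega
  have hcop : Nat.Coprime d a := by
    rw [Nat.coprime_iff_gcd_eq_one]
    by_contra hne1
    obtain ⟨p, hp, hpd⟩ := Nat.exists_prime_and_dvd hne1
    have h1 : p ∣ d := hpd.trans (Nat.gcd_dvd_left _ _)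
    have h2 : p ∣ a := hpd.trans (Nat.gcd_dvd_right _ _)
    have h3 := ha p hp h2
    have h4 := Nat.le_of_dvd hdpos h1
    omega
  have hdm : d ∣ m := hcop.dvd_of_dvd_mul_right (hna ▸ hddvd)
  have hqnd : ¬ q ∣ d := fun h => by have := Nat.le_of_dvd hdpos h; omega
  have hcopq : Nat.Coprime d q := ((hqp.coprime_iff_not_dvd).mpr hqnd).symm
  have hmq : m = q * (m / q) := (Nat.mul_div_cancel' hqdvd).symm
  have hdmq : d ∣ m / q := hcopq.dvd_of_dvd_mul_left (hmq ▸ hdm)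
  have hmqpos : 0 < m / q := Nat.div_pos hqm (by omega)
  have := Nat.le_of_dvd hmqpos hdmq
  omega

/-- Invariant along the iteration of `redTop`. -/
lemma invariant (n : ℕ) (hn : 0 < n) (j : ℕ) :
    ∃ a, n = redTop^[j] n * a ∧
      ∀ p, p.Prime → p ∣ a → largestPrimeFactor (redTop^[j] n) ≤ p := by
  induction j with
  | zero =>
    refine ⟨1, by simp, ?_⟩
    intro p hp hpd
    rw [Nat.dvd_one] at hpd
    exact absurd hpd hp.ne_one
  | succ j ih =>
    obtain ⟨a, hna, hpa⟩ := ih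
    set m := redTop^[j] n with hm
    rw [Function.iterate_succ_apply']
    rw [← hm]
    by_cases hm1 : m ≤ 1
    · have hmpos : 0 < m := Nat.pos_of_dvd_of_pos ⟨a, hna⟩ hn
      have hme : m = 1 := by omega
      rw [hme, redTop_one]
      refine ⟨a, by rw [← hme]; exact hna, ?_⟩
      intro p hp _
      rw [lpf_one_of_le le_rfl]
      exact hp.pos
    · push_neg at hm1
      have hqp : (largestPrimeFactor m).Prime := lpf_prime hm1
      have hqdvd : largestPrimeFactor m ∣ m := lpf_dvd hm1
      have hmq : m = largestPrimeFactor m * (m / largestPrimeFactor m) :=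
        (Nat.mul_div_cancel' hqdvd).symm
      have hrt : redTop m = m / largestPrimeFactor m := rfl
      have hmpos : 0 < m := by omega
      refine ⟨largestPrimeFactor m * a, ?_, ?_⟩
      · rw [hrt, hna]
        calc m * a = (largestPrimeFactor m * (m / largestPrimeFactor m)) * a := by
              rw [← hmq]
          _ = m / largestPrimeFactor m * (largestPrimeFactor m * a) := by ring
      · intro p hp hpd
        have hlp : largestPrimeFactor (redTop m) ≤ largestPrimeFactor m := by
          rw [hrt]
          exact lpf_mono (Nat.div_dvd_of_dvd hqdvd) hmpos
        rcases (Nat.Prime.dvd_mul hp).mp hpd with h | h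
        · have : p = largestPrimeFactor m := (Nat.prime_dvd_prime_iff_eq hp hqp).mp h
          omega
        · exact le_trans hlp (hpa p hp h)

lemma chain_of_gap2 {n : ℕ} (hn : 0 < n) (hg : Gap2 n) (j : ℕ)
    (hmj : 1 < redTop^[j] n) :
    largestPrimeFactor (redTop^[j] n) ≤
      2 * (redTop^[j] n / largestPrimeFactor (redTop^[j] n)) := by
  obtain ⟨a, hna, hpa⟩ := invariant n hn j
  exact chainstep hn hg hna hmj hpa

/-- The constructive direction: gluing a prime on top preserves `Gap2`. -/
lemma gap2_step {q m : ℕ} (hq : q.Prime) (hm : 0 < m) (hg : Gap2 m)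
    (hqm : q ≤ 2 * m) : Gap2 (q * m) := by
  intro d hd hdn
  have hq2 := hq.two_le
  by_cases hqd : q ∣ d
  · obtain ⟨g, rfl⟩ := hqd
    have hgm : g ∣ m := (mul_dvd_mul_iff_left (show q ≠ 0 by omega)).mp hd
    have hglt : g < m := by
      rcases lt_or_eq_of_le (Nat.le_of_dvd hm hgm) with h | h
      · exact h
      · subst h; omega
    obtain ⟨g', hg'm, hgg', hg'2⟩ := hg g hgm hglt
    refine ⟨q * g', mul_dvd_mul_left q hg'm, ?_, ?_⟩
    · exact mul_lt_mul_of_pos_left hgg' (by omega)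
    · calc q * g' ≤ q * (2 * g) := Nat.mul_le_mul_left q hg'2
        _ = 2 * (q * g) := by ring
  · have hcop : Nat.Coprime d q := ((hq.coprime_iff_not_dvd).mpr hqd).symm
    have hdm : d ∣ m := hcop.dvd_of_dvd_mul_left hd
    rcases lt_or_eq_of_le (Nat.le_of_dvd hm hdm) with h | h
    · obtain ⟨f, hf, h1, h2⟩ := hg d hdm h
      exact ⟨f, hf.mul_left q, h1, h2⟩
    · subst h
      have hsne : (d.divisors.filter (fun g => q * g ≤ 2 * d)).Nonempty :=
        ⟨1, by simp [Nat.mem_divisors, hm.ne']; omega⟩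
      set g := Finset.max' _ hsne with hgdef
      have hgmem := Finset.max'_mem _ hsne
      rw [Finset.mem_filter, Nat.mem_divisors] at hgmem
      obtain ⟨⟨hgm, _⟩, hgle⟩ := hgmem
      have hgpos : 0 < g := Nat.pos_of_dvd_of_pos hgm hm
      have hkey : d < q * g := by
        by_contra hle
        push_neg at hle
        have hglt : g < d := by
          rcases lt_or_eq_of_le (Nat.le_of_dvd hm hgm) with h | h
          · exact h
          · exfalso
            rw [← hgdef] at h
            rw [h] at hle
            nlinarith
        obtain ⟨g', hg'm, hgg', hg'2⟩ := hg g hgm hglt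
        have hcond : q * g' ≤ 2 * d := by
          calc q * g' ≤ q * (2 * g) := Nat.mul_le_mul_left q hg'2
            _ = 2 * (q * g) := by ring
            _ ≤ 2 * d := by omega
        have : g' ≤ g := by
          apply Finset.le_max' _ g'
          rw [Finset.mem_filter, Nat.mem_divisors]
          exact ⟨⟨hg'm, hm.ne'⟩, hcond⟩
        omega
      exact ⟨q * g, mul_dvd_mul_left q hgm, hkey, hgle⟩

/-- The chain condition implies `Gap2`, by strong induction. -/
lemma gap2_of_chain : ∀ n : ℕ, 0 < n →
    (∀ j, 1 < redTop^[j] n → largestPrimeFactor (redTop^[j] n) ≤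
      2 * (redTop^[j] n / largestPrimeFactor (redTop^[j] n))) →
    Gap2 n := by
  intro n
  induction n using Nat.strong_induction_on with
  | _ n ih =>
    intro hn hc
    by_cases hn1 : n ≤ 1
    · have : n = 1 := by omega
      rw [this]; exact gap2_one
    · push_neg at hn1
      have hqp : (largestPrimeFactor n).Prime := lpf_prime hn1
      have hqdvd : largestPrimeFactor n ∣ n := lpf_dvd hn1
      set q := largestPrimeFactor n with hq
      set m := n / q with hm
      have hnm : n = q * m := (Nat.mul_div_cancel' hqdvd).symm
      have hq2 : 2 ≤ q := hqp.two_le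
      have hmpos : 0 < m := Nat.div_pos (Nat.le_of_dvd (by omega) hqdvd) (by omega)
      have hmlt : m < n := by nlinarith
      have hrt : redTop n = m := rfl
      have hgm : Gap2 m := by
        apply ih m hmlt hmpos
        intro j hj
        have hiter : redTop^[j] m = redTop^[j+1] n := by
          rw [Function.iterate_succ_apply, hrt]
        rw [hiter] at hj ⊢
        exact hc (j+1) hj
      have hq2m : q ≤ 2 * m := by
        have h0 := hc 0 (by simpa using hn1)
        simpa using h0
      rw [hnm]
      exact gap2_step hqp hmpos hgm hq2m

theorem tenenbaum_condition (n : ℕ) (hn : 1 < n) :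
    maxDivisorRatio n ≤ 2 ↔
      maxDivisorRatio (n / largestPrimeFactor n) ≤ 2 ∧
      (largestPrimeFactor n : ℝ) ≤ Real.sqrt (2 * (n : ℝ)) := by
  have hn0 : 0 < n := by omega
  have hqp : (largestPrimeFactor n).Prime := lpf_prime hn
  have hqdvd : largestPrimeFactor n ∣ n := lpf_dvd hn
  set q := largestPrimeFactor n with hqdef
  set m := n / q with hmdef
  have hnm : n = q * m := (Nat.mul_div_cancel' hqdvd).symm
  have hq2 : 2 ≤ q := hqp.two_le
  have hmpos : 0 < m := Nat.div_pos (Nat.le_of_dvd hn0 hqdvd) (by omega)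
  have hsqrt : ((q : ℝ) ≤ Real.sqrt (2 * (n : ℝ))) ↔ q ≤ 2 * m := by
    rw [Real.le_sqrt (by positivity) (by positivity)]
    constructor
    · intro h
      have h2 : q ^ 2 ≤ 2 * n := by exact_mod_cast h
      rw [hnm] at h2
      nlinarith
    · intro h
      have h2 : q ^ 2 ≤ 2 * n := by rw [hnm]; nlinarith
      exact_mod_cast h2
  rw [mdr_le_two_iff hn0, mdr_le_two_iff hmpos, hsqrt]
  have hrt : redTop n = m := rfl
  constructor
  · intro hg
    constructor
    · apply gap2_of_chain m hmpos
      intro j hj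
      have hiter : redTop^[j] m = redTop^[j+1] n := by
        rw [Function.iterate_succ_apply, hrt]
      rw [hiter] at hj ⊢
      exact chain_of_gap2 hn0 hg (j+1) hj
    · have h0 := chain_of_gap2 hn0 hg 0 (by simpa using hn)
      simpa using h0
  · rintro ⟨hgm, hq2m⟩
    rw [hnm]
    exact gap2_step hqp hmpos hgm hq2m
end
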